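/- arXiv:1607.01413 — 9 statements merged into one kernel-verified Lean document; each statement's English description precedes it below -/
import Mathlib

section
/- Let M be a complex Hilbert space, Y a positive contraction on M, and τ ∈ 𝕋². Then for every λ ∈ 𝔻² the operator 1 − τ̄¹λ¹(1−Y) − τ̄²λ²Y is invertible in B(M) (indeed ‖τ̄¹λ¹(1−Y) + τ̄²λ²Y‖ ≤ ‖λ‖_∞ < 1), the operator I_Y(λ) = (τ̄¹λ¹Y + τ̄²λ²(1−Y) − τ̄¹τ̄²λ¹λ²)(1 − τ̄¹λ¹(1−Y) − τ̄²λ²Y)^{−1} satisfies ‖I_Y(λ)‖ ≤ 1, and the map λ ↦ I_Y(λ) is holomorphic on 𝔻². -/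
/-!
Write `A = 1 - Y`, `a = τ̄¹λ¹`, `b = τ̄²λ²`. The positive operators `A` and `Y` commute and sum to
`1`, so every vector splits as `x = A x + Y x` with `⟪A x, Y x⟫ ≥ 0`. For such a splitting
`‖a • A x + b • Y x‖ ≤ max ‖a‖ ‖b‖ * ‖x‖`, which bounds `a A + b Y` by `‖λ‖_∞ < 1` and makes the
denominator `1 - a A - b Y = (1 - a) A + (1 - b) Y` invertible. The numerator is
`b (1 - a) A + a (1 - b) Y`, and comparing the squared norms of the two operators at a vector
reduces `‖I_Y(λ)‖ ≤ 1` to the identity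
`2 Re ((1 - b̄ a)(1 - ā)(1 - b)) = |1 - b|² (1 - |a|²) + |1 - a|² (1 - |b|²)`.
Holomorphy holds because inversion is holomorphic on the units.
-/

open Complex Filter Set

/-- The operator-valued rational function `I_Y(λ)` associated to a positive
contraction `Y` and a point `τ` of the torus. -/
noncomputable def IY {M : Type*} [NormedAddCommGroup M] [InnerProductSpace ℂ M]
    [CompleteSpace M] (Y : M →L[ℂ] M) (τ z : ℂ × ℂ) : M →L[ℂ] M :=
  ((starRingEnd ℂ τ.1 * z.1) • Y + (starRingEnd ℂ τ.2 * z.2) • ((1 : M →L[ℂ] M) - Y)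
      - (starRingEnd ℂ τ.1 * starRingEnd ℂ τ.2 * z.1 * z.2) • (1 : M →L[ℂ] M)) *
    Ring.inverse ((1 : M →L[ℂ] M) - (starRingEnd ℂ τ.1 * z.1) • ((1 : M →L[ℂ] M) - Y)
      - (starRingEnd ℂ τ.2 * z.2) • Y)

open scoped ComplexOrder

section InnerProduct

variable {E : Type*} [NormedAddCommGroup E] [InnerProductSpace ℂ E]

theorem norm_smul_add_smul_sq (a b : ℂ) (p q : E) :
    ‖a • p + b • q‖ ^ 2 =
      ‖a‖ ^ 2 * ‖p‖ ^ 2 + ‖b‖ ^ 2 * ‖q‖ ^ 2 + 2 * (starRingEnd ℂ a * b * inner ℂ p q).re := by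
  rw [norm_add_sq (𝕜 := ℂ), inner_smul_left, inner_smul_right, norm_smul, norm_smul,
    RCLike.re_to_complex, ← mul_assoc]
  ring

theorem norm_add_sq_of_inner_nonneg {p q : E} (hpq : 0 ≤ inner ℂ p q) :
    ‖p + q‖ ^ 2 = ‖p‖ ^ 2 + ‖q‖ ^ 2 + 2 * ‖inner ℂ p q‖ := by
  simpa [re_eq_norm.mpr hpq] using norm_smul_add_smul_sq (1 : ℂ) 1 p q

theorem norm_smul_add_smul_le_max_mul {p q : E} (hpq : 0 ≤ inner ℂ p q) (a b : ℂ) :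
    ‖a • p + b • q‖ ≤ max ‖a‖ ‖b‖ * ‖p + q‖ := by
  set m := max ‖a‖ ‖b‖
  have hab : ‖a‖ * ‖b‖ ≤ m ^ 2 := by
    nlinarith [le_max_left ‖a‖ ‖b‖, le_max_right ‖a‖ ‖b‖, norm_nonneg a, norm_nonneg b]
  have ha : ‖a‖ ^ 2 ≤ m ^ 2 := by gcongr; exact le_max_left _ _
  have hb : ‖b‖ ^ 2 ≤ m ^ 2 := by gcongr; exact le_max_right _ _
  have hcross : (starRingEnd ℂ a * b * inner ℂ p q).re ≤ m ^ 2 * ‖inner ℂ p q‖ :=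
    calc (starRingEnd ℂ a * b * inner ℂ p q).re ≤ ‖starRingEnd ℂ a * b * inner ℂ p q‖ :=
          re_le_norm _
      _ = ‖a‖ * ‖b‖ * ‖inner ℂ p q‖ := by rw [norm_mul, norm_mul, RCLike.norm_conj]
      _ ≤ m ^ 2 * ‖inner ℂ p q‖ := by gcongr
  have hsq : ‖a • p + b • q‖ ^ 2 ≤ (m * ‖p + q‖) ^ 2 := by
    rw [norm_smul_add_smul_sq, mul_pow, norm_add_sq_of_inner_nonneg hpq]
    nlinarith [sq_nonneg ‖p‖, sq_nonneg ‖q‖]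
  exact pow_le_pow_iff_left₀ (norm_nonneg _) (by positivity) two_ne_zero |>.mp hsq

theorem two_mul_re_one_sub_conj_mul_mul_conj_one_sub_mul_one_sub (a b : ℂ) :
    2 * ((1 - starRingEnd ℂ b * a) * starRingEnd ℂ (1 - a) * (1 - b)).re =
      ‖1 - b‖ ^ 2 * (1 - ‖a‖ ^ 2) + ‖1 - a‖ ^ 2 * (1 - ‖b‖ ^ 2) := by
  simp only [Complex.sq_norm, normSq_apply, mul_re, mul_im, sub_re, sub_im, one_re, one_im,
    conj_re, conj_im]
  ring

theorem norm_smul_mul_one_sub_add_le {u v : E} (huv : 0 ≤ inner ℂ u v) {a b : ℂ}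
    (ha : ‖a‖ ≤ 1) (hb : ‖b‖ ≤ 1) :
    ‖(b * (1 - a)) • u + (a * (1 - b)) • v‖ ≤ ‖(1 - a) • u + (1 - b) • v‖ := by
  set t := (inner ℂ u v).re
  have ht : 0 ≤ t := (Complex.nonneg_iff.mp huv).1
  have huv_eq : inner ℂ u v = t := eq_re_of_ofReal_le (r := 0) (by simpa using huv)
  have hcross : 2 * (starRingEnd ℂ (1 - a) * (1 - b) * inner ℂ u v).re
      - 2 * (starRingEnd ℂ (b * (1 - a)) * (a * (1 - b)) * inner ℂ u v).re
      = t * (‖1 - b‖ ^ 2 * (1 - ‖a‖ ^ 2) + ‖1 - a‖ ^ 2 * (1 - ‖b‖ ^ 2)) := by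
    have hdiff : starRingEnd ℂ (1 - a) * (1 - b) * inner ℂ u v
        - starRingEnd ℂ (b * (1 - a)) * (a * (1 - b)) * inner ℂ u v
        = (1 - starRingEnd ℂ b * a) * starRingEnd ℂ (1 - a) * (1 - b) * t := by
      rw [huv_eq, map_mul]; ring
    rw [← mul_sub, ← sub_re, hdiff, re_mul_ofReal,
      ← two_mul_re_one_sub_conj_mul_mul_conj_one_sub_mul_one_sub]
    ring
  have hsq : ‖(b * (1 - a)) • u + (a * (1 - b)) • v‖ ^ 2 ≤ ‖(1 - a) • u + (1 - b) • v‖ ^ 2 := by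
    rw [norm_smul_add_smul_sq, norm_smul_add_smul_sq]
    simp only [norm_mul, mul_pow]
    have ha2 : ‖a‖ ^ 2 ≤ 1 := pow_le_one₀ (norm_nonneg a) ha
    have hb2 : ‖b‖ ^ 2 ≤ 1 := pow_le_one₀ (norm_nonneg b) hb
    nlinarith [mul_nonneg (mul_nonneg (sq_nonneg ‖1 - a‖) (sub_nonneg.mpr hb2)) (sq_nonneg ‖u‖),
      mul_nonneg (mul_nonneg (sq_nonneg ‖1 - b‖) (sub_nonneg.mpr ha2)) (sq_nonneg ‖v‖),
      mul_nonneg ht (add_nonneg (mul_nonneg (sq_nonneg ‖1 - b‖) (sub_nonneg.mpr ha2))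
        (mul_nonneg (sq_nonneg ‖1 - a‖) (sub_nonneg.mpr hb2)))]
  exact pow_le_pow_iff_left₀ (norm_nonneg _) (norm_nonneg _) two_ne_zero |>.mp hsq

end InnerProduct

namespace ContinuousLinearMap

variable {M : Type*} [NormedAddCommGroup M] [InnerProductSpace ℂ M]

theorem IsPositive.inner_apply_apply_nonneg_of_add_eq_one {A B : M →L[ℂ] M} (hA : A.IsPositive)
    (hB : B.IsPositive) (hAB : A + B = 1) (x : M) : 0 ≤ inner ℂ (A x) (B x) := by
  have hx : A x + B x = x := by simpa using congr($hAB x)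
  have hcomm : A (B x) = B (A x) := by
    rw [eq_sub_of_add_eq hAB]
    simp
  -- `⟪A x, B x⟫ = ⟪B (A x), x⟫`, and split this `x` as `A x + B x`
  have hsplit : inner ℂ (A x) (B x) = inner ℂ (B (A x)) (A x) + inner ℂ (A (B x)) (B x) := by
    rw [hcomm, ← inner_add_right, hx, hB.inner_left_eq_inner_right]
  rw [hsplit]
  exact add_nonneg (hB.inner_nonneg_left _) (hA.inner_nonneg_left _)

theorem norm_smul_add_smul_le_max_of_isPositive {A B : M →L[ℂ] M} (hA : A.IsPositive)
    (hB : B.IsPositive) (hAB : A + B = 1) (a b : ℂ) : ‖a • A + b • B‖ ≤ max ‖a‖ ‖b‖ := by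
  refine opNorm_le_bound _ (by positivity) fun x => ?_
  have hx : A x + B x = x := by simpa using congr($hAB x)
  simpa [hx] using norm_smul_add_smul_le_max_mul
    (hA.inner_apply_apply_nonneg_of_add_eq_one hB hAB x) a b

theorem norm_mul_ringInverse_le_one {𝕜 F : Type*} [NontriviallyNormedField 𝕜]
    [NormedAddCommGroup F] [NormedSpace 𝕜 F] {N D : F →L[𝕜] F} (h : ∀ x, ‖N x‖ ≤ ‖D x‖) :
    ‖N * Ring.inverse D‖ ≤ 1 := by
  by_cases hD : IsUnit D
  · obtain ⟨U, rfl⟩ := hD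
    rw [Ring.inverse_unit]
    refine opNorm_le_bound _ zero_le_one fun v => ?_
    calc ‖(N * ↑U⁻¹) v‖ ≤ ‖(U : F →L[𝕜] F) ((↑U⁻¹ : F →L[𝕜] F) v)‖ := h _
      _ = 1 * ‖v‖ := by rw [← mul_apply_eq_comp, U.mul_inv, one_apply_eq_self, one_mul]
  · simp [Ring.inverse_non_unit D hD]

theorem norm_mul_ringInverse_le_one_of_isPositive {A B : M →L[ℂ] M} (hA : A.IsPositive)
    (hB : B.IsPositive) (hAB : A + B = 1) {a b : ℂ} (ha : ‖a‖ ≤ 1) (hb : ‖b‖ ≤ 1) :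
    ‖((b * (1 - a)) • A + (a * (1 - b)) • B) * Ring.inverse ((1 - a) • A + (1 - b) • B)‖ ≤ 1 :=
  norm_mul_ringInverse_le_one fun x => by
    simpa using norm_smul_mul_one_sub_add_le
      (hA.inner_apply_apply_nonneg_of_add_eq_one hB hAB x) ha hb

end ContinuousLinearMap

theorem stmt0 {M : Type*} [NormedAddCommGroup M] [InnerProductSpace ℂ M] [CompleteSpace M]
    (Y : M →L[ℂ] M) (hY : Y.IsPositive) (hY' : ((1 : M →L[ℂ] M) - Y).IsPositive)
    (τ : ℂ × ℂ) (hτ1 : ‖τ.1‖ = 1) (hτ2 : ‖τ.2‖ = 1) :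
    (∀ z : ℂ × ℂ, ‖z‖ < 1 →
      ‖(starRingEnd ℂ τ.1 * z.1) • ((1 : M →L[ℂ] M) - Y) + (starRingEnd ℂ τ.2 * z.2) • Y‖ ≤ ‖z‖ ∧
      IsUnit ((1 : M →L[ℂ] M) - (starRingEnd ℂ τ.1 * z.1) • ((1 : M →L[ℂ] M) - Y)
        - (starRingEnd ℂ τ.2 * z.2) • Y) ∧
      ‖IY Y τ z‖ ≤ 1) ∧
    DifferentiableOn ℂ (IY Y τ) {z : ℂ × ℂ | ‖z‖ < 1} := by
  have hAB : (1 - Y) + Y = 1 := sub_add_cancel 1 Y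
  have ha (z : ℂ × ℂ) : ‖starRingEnd ℂ τ.1 * z.1‖ ≤ ‖z‖ := by
    simpa [hτ1] using norm_fst_le z
  have hb (z : ℂ × ℂ) : ‖starRingEnd ℂ τ.2 * z.2‖ ≤ ‖z‖ := by
    simpa [hτ2] using norm_snd_le z
  have hnorm (z : ℂ × ℂ) :
      ‖(starRingEnd ℂ τ.1 * z.1) • (1 - Y) + (starRingEnd ℂ τ.2 * z.2) • Y‖ ≤ ‖z‖ :=
    (ContinuousLinearMap.norm_smul_add_smul_le_max_of_isPositive hY' hY hAB _ _).trans
      (max_le (ha z) (hb z))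
  have hunit (z : ℂ × ℂ) (hz : ‖z‖ < 1) : IsUnit (1 - (starRingEnd ℂ τ.1 * z.1) • (1 - Y)
      - (starRingEnd ℂ τ.2 * z.2) • Y) := by
    rw [sub_sub]
    exact isUnit_one_sub_of_norm_lt_one ((hnorm z).trans_lt hz)
  refine ⟨fun z hz => ⟨hnorm z, hunit z hz, ?_⟩, fun z hz => ?_⟩
  · have hIY : IY Y τ z = ((starRingEnd ℂ τ.2 * z.2 * (1 - starRingEnd ℂ τ.1 * z.1)) • (1 - Y)
        + (starRingEnd ℂ τ.1 * z.1 * (1 - starRingEnd ℂ τ.2 * z.2)) • Y)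
        * Ring.inverse ((1 - starRingEnd ℂ τ.1 * z.1) • (1 - Y)
          + (1 - starRingEnd ℂ τ.2 * z.2) • Y) := by
      unfold IY
      congr 1
      · module
      · congr 1; module
    rw [hIY]
    exact ContinuousLinearMap.norm_mul_ringInverse_le_one_of_isPositive hY' hY hAB
      ((ha z).trans hz.le) ((hb z).trans hz.le)
  · refine DifferentiableAt.differentiableWithinAt ?_
    unfold IY
    exact (by fun_prop : DifferentiableAt ℂ _ z).mul
      ((by fun_prop : DifferentiableAt ℂ _ z).inverse (hunit z hz))
end

section
/- Let M be a complex Hilbert space, Y a positive contraction on M, τ ∈ 𝕋², and δ ∈ ℂ² with Re(τ̄¹δ¹) < 0 and Re(τ̄²δ²) < 0. Then the operator B = τ²δ¹(1−Y) + τ¹δ²Y is invertible in B(M), and for every t > 0 such that τ + tδ ∈ 𝔻², one has I_Y(τ + tδ) = 1 + t·δ¹δ²·B^{−1}. In particular, lim_{t→0⁺} (I_Y(τ + tδ) − 1)/t = δ¹δ²·B^{−1} in operator norm. -/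
open Complex Filter Set

theorem Ring.inverse_smul {𝕜 R : Type*} [Field 𝕜] [Ring R] [Algebra 𝕜 R] {c : 𝕜} (hc : c ≠ 0)
    (x : R) : Ring.inverse (c • x) = c⁻¹ • Ring.inverse x := by
  by_cases hx : IsUnit x
  · have hcx : IsUnit (c • x) := by rwa [← Units.smul_mk0 hc, isUnit_smul_iff]
    rw [eq_comm, ← one_mul (Ring.inverse (c • x)), Ring.eq_mul_inverse_iff_mul_eq _ _ _ hcx,
      smul_mul_smul_comm, inv_mul_cancel₀ hc, one_smul, Ring.inverse_mul_cancel _ hx]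
  · rw [Ring.inverse_non_unit x hx, Ring.inverse_non_unit, smul_zero]
    rwa [← Units.smul_mk0 hc, isUnit_smul_iff]

theorem Complex.conj_mul_self_of_norm_eq_one {z : ℂ} (hz : ‖z‖ = 1) : starRingEnd ℂ z * z = 1 := by
  rw [Complex.conj_mul', hz]; norm_num

section
variable {E : Type*} [NormedAddCommGroup E] [InnerProductSpace ℂ E] [CompleteSpace E]

theorem ContinuousLinearMap.isUnit_smul_add_smul_of_re_pos {P Q : E →L[ℂ] E} (hP : P.IsPositive)
    (hQ : Q.IsPositive) (hPQ : P + Q = 1) {a b : ℂ} (ha : 0 < a.re) (hb : 0 < b.re) :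
    IsUnit (a • P + b • Q) := by
  set c : NNReal := ⟨min a.re b.re, by positivity⟩
  refine isUnit_of_forall_le_norm_inner_map _ (c := c) (lt_min ha hb) fun x => ?_
  obtain ⟨hp, hp_im⟩ := Complex.nonneg_iff.1 (hP.inner_nonneg_left x)
  obtain ⟨hq, hq_im⟩ := Complex.nonneg_iff.1 (hQ.inner_nonneg_left x)
  have hsum : (inner ℂ (P x) x).re + (inner ℂ (Q x) x).re = ‖x‖ ^ 2 := by
    rw [← Complex.add_re, ← inner_add_left, ← add_apply, hPQ, one_apply_eq_self,
      inner_self_eq_norm_sq_to_K]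
    norm_cast
  have hre : (inner ℂ ((a • P + b • Q) x) x).re =
      a.re * (inner ℂ (P x) x).re + b.re * (inner ℂ (Q x) x).re := by
    simp [← hp_im, ← hq_im, mul_comm]
  have hc1 : (c : ℝ) ≤ a.re := min_le_left _ _
  have hc2 : (c : ℝ) ≤ b.re := min_le_right _ _
  calc ‖x‖ ^ 2 * c ≤ (inner ℂ ((a • P + b • Q) x) x).re := by rw [hre, ← hsum]; nlinarith
    _ ≤ _ := Complex.re_le_norm _

theorem IY_add_mul (Y : E →L[ℂ] E) {τ : ℂ × ℂ} (hτ1 : ‖τ.1‖ = 1) (hτ2 : ‖τ.2‖ = 1) (δ : ℂ × ℂ)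
    (hB : IsUnit ((τ.2 * δ.1) • ((1 : E →L[ℂ] E) - Y) + (τ.1 * δ.2) • Y)) {t : ℂ} (ht : t ≠ 0) :
    IY Y τ (τ.1 + t * δ.1, τ.2 + t * δ.2) =
      1 + (t * δ.1 * δ.2) •
        Ring.inverse ((τ.2 * δ.1) • ((1 : E →L[ℂ] E) - Y) + (τ.1 * δ.2) • Y) := by
  set B := (τ.2 * δ.1) • ((1 : E →L[ℂ] E) - Y) + (τ.1 * δ.2) • Y
  set u₁ := starRingEnd ℂ τ.1
  set u₂ := starRingEnd ℂ τ.2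
  have h₁ : u₁ * τ.1 = 1 := Complex.conj_mul_self_of_norm_eq_one hτ1
  have h₂ : u₂ * τ.2 = 1 := Complex.conj_mul_self_of_norm_eq_one hτ2
  have hc : -t * u₁ * u₂ ≠ 0 :=
    mul_ne_zero (mul_ne_zero (neg_ne_zero.2 ht) (left_ne_zero_of_mul_eq_one h₁))
      (left_ne_zero_of_mul_eq_one h₂)
  have hN : (u₁ * (τ.1 + t * δ.1)) • Y + (u₂ * (τ.2 + t * δ.2)) • (1 - Y)
      - (u₁ * u₂ * (τ.1 + t * δ.1) * (τ.2 + t * δ.2)) • (1 : E →L[ℂ] E)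
      = (-t * u₁ * u₂) • (B + (t * δ.1 * δ.2) • 1) := by
    linear_combination (norm := module) ((1 + t * u₂ * δ.2) * h₁ - (1 + t * u₁ * δ.1) * h₂) • Y
      - (u₂ * (τ.2 + t * δ.2) * h₁) • (1 : E →L[ℂ] E)
  have hD : 1 - (u₁ * (τ.1 + t * δ.1)) • ((1 : E →L[ℂ] E) - Y) - (u₂ * (τ.2 + t * δ.2)) • Y
      = (-t * u₁ * u₂) • B := by
    linear_combination (norm := module) ((1 + t * u₂ * δ.2) * h₁ - (1 + t * u₁ * δ.1) * h₂) • Y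
      + (t * u₁ * δ.1 * h₂ - h₁) • (1 : E →L[ℂ] E)
  rw [IY, hN, hD, Ring.inverse_smul hc, smul_mul_smul_comm, mul_inv_cancel₀ hc, one_smul, add_mul,
    Ring.mul_inverse_cancel _ hB, smul_mul_assoc, one_mul]

theorem isUnit_smul_one_sub_add_smul_of_inward (Y : E →L[ℂ] E) (hY : Y.IsPositive)
    (hY' : ((1 : E →L[ℂ] E) - Y).IsPositive)
    {τ : ℂ × ℂ} (hτ1 : ‖τ.1‖ = 1) (hτ2 : ‖τ.2‖ = 1) {δ : ℂ × ℂ}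
    (hδ1 : (starRingEnd ℂ τ.1 * δ.1).re < 0) (hδ2 : (starRingEnd ℂ τ.2 * δ.2).re < 0) :
    IsUnit ((τ.2 * δ.1) • ((1 : E →L[ℂ] E) - Y) + (τ.1 * δ.2) • Y) := by
  have h₁ := Complex.conj_mul_self_of_norm_eq_one hτ1
  have h₂ := Complex.conj_mul_self_of_norm_eq_one hτ2
  have hA : IsUnit ((-(starRingEnd ℂ τ.1 * δ.1)) • ((1 : E →L[ℂ] E) - Y)
      + (-(starRingEnd ℂ τ.2 * δ.2)) • Y) :=
    ContinuousLinearMap.isUnit_smul_add_smul_of_re_pos hY' hY (sub_add_cancel 1 Y)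
      (by rw [neg_re]; exact neg_pos.2 hδ1) (by rw [neg_re]; exact neg_pos.2 hδ2)
  have hτ : -(τ.1 * τ.2) ≠ 0 :=
    neg_ne_zero.2 (mul_ne_zero (right_ne_zero_of_mul_eq_one h₁) (right_ne_zero_of_mul_eq_one h₂))
  have hB : (τ.2 * δ.1) • ((1 : E →L[ℂ] E) - Y) + (τ.1 * δ.2) • Y
      = (-(τ.1 * τ.2)) • ((-(starRingEnd ℂ τ.1 * δ.1)) • ((1 : E →L[ℂ] E) - Y)
        + (-(starRingEnd ℂ τ.2 * δ.2)) • Y) := by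
    linear_combination (norm := module) (-(τ.2 * δ.1) * h₁) • ((1 : E →L[ℂ] E) - Y)
      - (τ.1 * δ.2 * h₂) • Y
  rw [hB, ← Units.smul_mk0 hτ, isUnit_smul_iff]
  exact hA

end

theorem stmt2 {M : Type*} [NormedAddCommGroup M] [InnerProductSpace ℂ M] [CompleteSpace M]
    (Y : M →L[ℂ] M) (hY : Y.IsPositive) (hY' : ((1 : M →L[ℂ] M) - Y).IsPositive)
    (τ : ℂ × ℂ) (hτ1 : ‖τ.1‖ = 1) (hτ2 : ‖τ.2‖ = 1)
    (δ : ℂ × ℂ) (hδ1 : (starRingEnd ℂ τ.1 * δ.1).re < 0)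
    (hδ2 : (starRingEnd ℂ τ.2 * δ.2).re < 0) :
    IsUnit ((τ.2 * δ.1) • ((1 : M →L[ℂ] M) - Y) + (τ.1 * δ.2) • Y) ∧
    (∀ t : ℝ, 0 < t → ‖(τ.1 + (t : ℂ) * δ.1, τ.2 + (t : ℂ) * δ.2)‖ < 1 →
      IY Y τ (τ.1 + (t : ℂ) * δ.1, τ.2 + (t : ℂ) * δ.2) =
        1 + ((t : ℂ) * δ.1 * δ.2) •
          Ring.inverse ((τ.2 * δ.1) • ((1 : M →L[ℂ] M) - Y) + (τ.1 * δ.2) • Y)) ∧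
    Tendsto (fun t : ℝ => t⁻¹ • (IY Y τ (τ.1 + (t : ℂ) * δ.1, τ.2 + (t : ℂ) * δ.2) - 1))
      (nhdsWithin (0 : ℝ) (Set.Ioi 0))
      (nhds ((δ.1 * δ.2) •
        Ring.inverse ((τ.2 * δ.1) • ((1 : M →L[ℂ] M) - Y) + (τ.1 * δ.2) • Y))) := by
  have hB := isUnit_smul_one_sub_add_smul_of_inward Y hY hY' hτ1 hτ2 hδ1 hδ2
  have hIY : ∀ t : ℝ, 0 < t → IY Y τ (τ.1 + (t : ℂ) * δ.1, τ.2 + (t : ℂ) * δ.2) =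
      1 + ((t : ℂ) * δ.1 * δ.2) •
        Ring.inverse ((τ.2 * δ.1) • ((1 : M →L[ℂ] M) - Y) + (τ.1 * δ.2) • Y) :=
    fun t ht => IY_add_mul Y hτ1 hτ2 δ hB (Complex.ofReal_ne_zero.2 ht.ne')
  refine ⟨hB, fun t ht _ => hIY t ht, tendsto_const_nhds.congr' ?_⟩
  filter_upwards [self_mem_nhdsWithin] with t (ht : 0 < t)
  rw [hIY t ht, add_sub_cancel_left, ← Complex.coe_smul, smul_smul, mul_assoc,
    Complex.ofReal_inv, inv_mul_cancel_left₀ (Complex.ofReal_ne_zero.2 ht.ne')]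
end

section
/- Let τ ∈ 𝕋² and y ∈ (0,1). Then for all λ, μ ∈ 𝔻², 1 − conj(φ_y(μ))·φ_y(λ) = (1 − conj(μ¹)λ¹)·conj(u¹_{y,μ})·u¹_{y,λ} + (1 − conj(μ²)λ²)·conj(u²_{y,μ})·u²_{y,λ}, where u¹_{y,λ} = √y(1 − τ̄²λ²)/(1 − τ̄¹λ¹(1−y) − τ̄²λ²y) and u²_{y,λ} = √(1−y)(1 − τ̄¹λ¹)/(1 − τ̄¹λ¹(1−y) − τ̄²λ²y). That is, (ℂ², u_y) is a Hilbert space model for φ_y. -/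
open Complex Filter Set

/-- The scalar rational inner function `φ_y` associated to `τ ∈ 𝕋²` and `y ∈ [0,1]`. -/
noncomputable def phiy (τ : ℂ × ℂ) (y : ℝ) (z : ℂ × ℂ) : ℂ :=
  (starRingEnd ℂ τ.1 * z.1 * (y : ℂ) + starRingEnd ℂ τ.2 * z.2 * (1 - (y : ℂ))
      - starRingEnd ℂ τ.1 * starRingEnd ℂ τ.2 * z.1 * z.2) /
    (1 - starRingEnd ℂ τ.1 * z.1 * (1 - (y : ℂ)) - starRingEnd ℂ τ.2 * z.2 * (y : ℂ))

/-- First component of the model vector `u_{y,λ}` for `φ_y`. -/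
noncomputable def u1 (τ : ℂ × ℂ) (y : ℝ) (z : ℂ × ℂ) : ℂ :=
  (Real.sqrt y : ℂ) * (1 - starRingEnd ℂ τ.2 * z.2) /
    (1 - starRingEnd ℂ τ.1 * z.1 * (1 - (y : ℂ)) - starRingEnd ℂ τ.2 * z.2 * (y : ℂ))

/-- Second component of the model vector `u_{y,λ}` for `φ_y`. -/
noncomputable def u2 (τ : ℂ × ℂ) (y : ℝ) (z : ℂ × ℂ) : ℂ :=
  (Real.sqrt (1 - y) : ℂ) * (1 - starRingEnd ℂ τ.1 * z.1) /
    (1 - starRingEnd ℂ τ.1 * z.1 * (1 - (y : ℂ)) - starRingEnd ℂ τ.2 * z.2 * (y : ℂ))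


/-! With `a = τ̄¹λ¹`, `b = τ̄²λ²`, `c = τ¹μ̄¹`, `d = τ²μ̄²` one has `μ̄¹λ¹ = ca` and `μ̄²λ² = db`
because `|τⁱ| = 1`, and `conj (φ_y(μ)) = num c d / den c d`. The model identity is then the
polynomial identity `den_mul_den_sub_num_mul_num` in four independent variables, divided by the
denominators, which do not vanish on the bidisk since `(1 - y) a + y b` lies in the open unit disk. -/

namespace phiy

variable {K : Type*}

def num [CommRing K] (y a b : K) : K := a * y + b * (1 - y) - a * b

def den [CommRing K] (y a b : K) : K := 1 - a * (1 - y) - b * y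

theorem map_num [CommRing K] {L : Type*} [CommRing L] (f : K →+* L) (y a b : K) :
    f (num y a b) = num (f y) (f a) (f b) := by
  simp only [num, map_sub, map_add, map_mul, map_one]

theorem map_den [CommRing K] {L : Type*} [CommRing L] (f : K →+* L) (y a b : K) :
    f (den y a b) = den (f y) (f a) (f b) := by
  simp only [den, map_sub, map_mul, map_one]

theorem den_mul_den_sub_num_mul_num [CommRing K] (y a b c d : K) :
    den y c d * den y a b - num y c d * num y a b =
      y * (1 - c * a) * ((1 - d) * (1 - b)) + (1 - y) * (1 - d * b) * ((1 - c) * (1 - a)) := by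
  simp only [num, den]; ring

theorem one_sub_div_mul_div [Field K] {y s t a b c d : K} (hs : s * s = y) (ht : t * t = 1 - y)
    (hab : den y a b ≠ 0) (hcd : den y c d ≠ 0) :
    1 - num y c d / den y c d * (num y a b / den y a b) =
      (1 - c * a) * (s * (1 - d) / den y c d) * (s * (1 - b) / den y a b) +
        (1 - d * b) * (t * (1 - c) / den y c d) * (t * (1 - a) / den y a b) := by
  field_simp
  rw [den_mul_den_sub_num_mul_num]
  linear_combination -(1 - c * a) * (1 - d) * (1 - b) * hs - (1 - d * b) * (1 - c) * (1 - a) * ht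

theorem den_ne_zero {y : ℝ} (hy0 : 0 ≤ y) (hy1 : y ≤ 1) {a b : ℂ} (ha : ‖a‖ < 1) (hb : ‖b‖ < 1) :
    den (y : ℂ) a b ≠ 0 := by
  have hmem : (1 - y) • a + y • b ∈ Metric.ball (0 : ℂ) 1 :=
    convex_ball (0 : ℂ) 1 (mem_ball_zero_iff.2 ha) (mem_ball_zero_iff.2 hb)
      (sub_nonneg.2 hy1) hy0 (by ring)
  intro h
  have h1 : (1 - y) • a + y • b = 1 := by
    simp only [den, Complex.real_smul] at h ⊢; push_cast; linear_combination -h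
  rw [h1, mem_ball_zero_iff, norm_one] at hmem
  exact lt_irrefl _ hmem

end phiy

theorem phiy_eq_num_div_den (τ : ℂ × ℂ) (y : ℝ) (z : ℂ × ℂ) :
    phiy τ y z = phiy.num (y : ℂ) (starRingEnd ℂ τ.1 * z.1) (starRingEnd ℂ τ.2 * z.2) /
      phiy.den (y : ℂ) (starRingEnd ℂ τ.1 * z.1) (starRingEnd ℂ τ.2 * z.2) := by
  simp only [phiy, phiy.num, phiy.den]; ring

theorem u1_eq_div_den (τ : ℂ × ℂ) (y : ℝ) (z : ℂ × ℂ) :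
    u1 τ y z = Real.sqrt y * (1 - starRingEnd ℂ τ.2 * z.2) /
      phiy.den (y : ℂ) (starRingEnd ℂ τ.1 * z.1) (starRingEnd ℂ τ.2 * z.2) :=
  rfl

theorem u2_eq_div_den (τ : ℂ × ℂ) (y : ℝ) (z : ℂ × ℂ) :
    u2 τ y z = Real.sqrt (1 - y) * (1 - starRingEnd ℂ τ.1 * z.1) /
      phiy.den (y : ℂ) (starRingEnd ℂ τ.1 * z.1) (starRingEnd ℂ τ.2 * z.2) :=
  rfl

theorem Complex.conj_mul_eq_of_norm_eq_one {τ : ℂ} (hτ : ‖τ‖ = 1) (w z : ℂ) :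
    starRingEnd ℂ w * z = (τ * starRingEnd ℂ w) * (starRingEnd ℂ τ * z) := by
  rw [mul_mul_mul_comm, Complex.mul_conj', hτ]
  simp

theorem stmt9 (τ : ℂ × ℂ) (hτ1 : ‖τ.1‖ = 1) (hτ2 : ‖τ.2‖ = 1)
    (y : ℝ) (hy0 : 0 < y) (hy1 : y < 1) :
    ∀ zl zm : ℂ × ℂ, ‖zl‖ < 1 → ‖zm‖ < 1 →
      1 - starRingEnd ℂ (phiy τ y zm) * phiy τ y zl =
        (1 - starRingEnd ℂ zm.1 * zl.1) * starRingEnd ℂ (u1 τ y zm) * u1 τ y zl +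
        (1 - starRingEnd ℂ zm.2 * zl.2) * starRingEnd ℂ (u2 τ y zm) * u2 τ y zl := by
  intro zl zm hzl hzm
  have hs : (Real.sqrt y : ℂ) * Real.sqrt y = y := by
    rw [← ofReal_mul, Real.mul_self_sqrt hy0.le]
  have ht : (Real.sqrt (1 - y) : ℂ) * Real.sqrt (1 - y) = 1 - y := by
    rw [← ofReal_mul, Real.mul_self_sqrt (sub_nonneg.2 hy1.le)]; push_cast; ring
  have hl1 : ‖zl.1‖ < 1 := (norm_fst_le zl).trans_lt hzl
  have hl2 : ‖zl.2‖ < 1 := (norm_snd_le zl).trans_lt hzl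
  have hm1 : ‖zm.1‖ < 1 := (norm_fst_le zm).trans_lt hzm
  have hm2 : ‖zm.2‖ < 1 := (norm_snd_le zm).trans_lt hzm
  rw [conj_mul_eq_of_norm_eq_one hτ1 zm.1 zl.1, conj_mul_eq_of_norm_eq_one hτ2 zm.2 zl.2,
    phiy_eq_num_div_den, phiy_eq_num_div_den, u1_eq_div_den, u1_eq_div_den, u2_eq_div_den,
    u2_eq_div_den]
  simp only [map_div₀, map_mul, map_sub, map_one, phiy.map_num, phiy.map_den, conj_ofReal, conj_conj]
  exact phiy.one_sub_div_mul_div hs ht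
    (phiy.den_ne_zero hy0.le hy1.le (by simpa [hτ1]) (by simpa [hτ2]))
    (phiy.den_ne_zero hy0.le hy1.le (by simpa [hτ1]) (by simpa [hτ2]))
end

section
/- Let τ ∈ 𝕋², y ∈ [0,1], c > 0, and λ ∈ 𝔻² with ‖τ − λ‖_∞ ≤ c(1 − ‖λ‖_∞). Then |τ̄¹λ¹ − τ̄²λ²| ≤ 2c·|1 − (1−y)τ̄¹λ¹ − y τ̄²λ²|. -/
open Complex

/-!
Put `a = τ̄¹λ¹` and `b = τ̄²λ²`. Since `|τ^j| = 1`, `|a - 1| = |λ¹ - τ¹|` and `|b - 1| = |λ² - τ²|`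
are at most `c(1 - ‖λ‖_∞)`, so `|a - b| ≤ 2c(1 - ‖λ‖_∞)`. On the other hand `|a|, |b| ≤ ‖λ‖_∞`,
so the convex combination `(1 - y)a + yb` has modulus at most `‖λ‖_∞` and
`|1 - (1 - y)a - yb| ≥ 1 - ‖λ‖_∞`.
-/

namespace Complex

open ComplexConjugate

lemma norm_conj_mul_sub_one {u : ℂ} (hu : ‖u‖ = 1) (w : ℂ) :
    ‖conj u * w - 1‖ = ‖w - u‖ := by
  have hconj : conj u * u = 1 := by rw [conj_mul', hu]; norm_num
  rw [← hconj, ← mul_sub, norm_mul, RCLike.norm_conj, hu, one_mul]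

lemma one_sub_le_norm_one_sub_convex_comb {a b : ℂ} {y r : ℝ} (hy0 : 0 ≤ y) (hy1 : y ≤ 1)
    (ha : ‖a‖ ≤ r) (hb : ‖b‖ ≤ r) :
    1 - r ≤ ‖1 - (1 - (y : ℂ)) * a - (y : ℂ) * b‖ := by
  have hcomb : ‖(1 - (y : ℂ)) * a + (y : ℂ) * b‖ ≤ r := by
    have h1y : (1 - (y : ℂ)) = ((1 - y : ℝ) : ℂ) := by push_cast; ring
    calc ‖(1 - (y : ℂ)) * a + (y : ℂ) * b‖ ≤ (1 - y) * ‖a‖ + y * ‖b‖ := by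
          refine (norm_add_le _ _).trans_eq ?_
          rw [norm_mul, norm_mul, h1y, Complex.norm_of_nonneg (by linarith),
            Complex.norm_of_nonneg hy0]
      _ ≤ (1 - y) * r + y * r := by gcongr
      _ = r := by ring
  calc 1 - r ≤ ‖(1 : ℂ)‖ - ‖(1 - (y : ℂ)) * a + (y : ℂ) * b‖ := by rw [norm_one]; linarith
    _ ≤ ‖1 - ((1 - (y : ℂ)) * a + (y : ℂ) * b)‖ := norm_sub_norm_le _ _
    _ = ‖1 - (1 - (y : ℂ)) * a - (y : ℂ) * b‖ := by rw [sub_add_eq_sub_sub]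

end Complex

theorem stmt10_general (τ : ℂ × ℂ) (hτ1 : ‖τ.1‖ = 1) (hτ2 : ‖τ.2‖ = 1)
    (y : ℝ) (hy0 : 0 ≤ y) (hy1 : y ≤ 1)
    (c : ℝ) (hc : 0 < c)
    (z : ℂ × ℂ) (hnt : ‖τ - z‖ ≤ c * (1 - ‖z‖)) :
    ‖starRingEnd ℂ τ.1 * z.1 - starRingEnd ℂ τ.2 * z.2‖ ≤
      2 * c * ‖1 - (1 - (y : ℂ)) * (starRingEnd ℂ τ.1 * z.1)
        - (y : ℂ) * (starRingEnd ℂ τ.2 * z.2)‖ := by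
  set a := starRingEnd ℂ τ.1 * z.1
  set b := starRingEnd ℂ τ.2 * z.2
  have hzτ : ‖z - τ‖ ≤ c * (1 - ‖z‖) := by rwa [norm_sub_rev]
  have ha : ‖a - 1‖ ≤ c * (1 - ‖z‖) :=
    (norm_conj_mul_sub_one hτ1 z.1).trans_le ((norm_fst_le (z - τ)).trans hzτ)
  have hb : ‖1 - b‖ ≤ c * (1 - ‖z‖) := by
    rw [norm_sub_rev, norm_conj_mul_sub_one hτ2 z.2]
    exact (norm_snd_le (z - τ)).trans hzτ
  have hgap : 1 - ‖z‖ ≤ ‖1 - (1 - (y : ℂ)) * a - (y : ℂ) * b‖ :=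
    one_sub_le_norm_one_sub_convex_comb hy0 hy1
      (by simpa [a, hτ1] using norm_fst_le z) (by simpa [b, hτ2] using norm_snd_le z)
  calc ‖a - b‖ ≤ ‖a - 1‖ + ‖1 - b‖ := norm_sub_le_norm_sub_add_norm_sub a 1 b
    _ ≤ 2 * c * (1 - ‖z‖) := by linarith
    _ ≤ 2 * c * ‖1 - (1 - (y : ℂ)) * a - (y : ℂ) * b‖ := by gcongr

theorem stmt10 (τ : ℂ × ℂ) (hτ1 : ‖τ.1‖ = 1) (hτ2 : ‖τ.2‖ = 1)
    (y : ℝ) (hy0 : 0 ≤ y) (hy1 : y ≤ 1)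
    (c : ℝ) (hc : 0 < c)
    (z : ℂ × ℂ) (hz : ‖z‖ < 1) (hnt : ‖τ - z‖ ≤ c * (1 - ‖z‖)) :
    ‖starRingEnd ℂ τ.1 * z.1 - starRingEnd ℂ τ.2 * z.2‖ ≤
      2 * c * ‖1 - (1 - (y : ℂ)) * (starRingEnd ℂ τ.1 * z.1)
        - (y : ℂ) * (starRingEnd ℂ τ.2 * z.2)‖ :=
  stmt10_general τ hτ1 hτ2 y hy0 hy1 c hc z hnt
end

section
/- Let τ ∈ 𝕋², y ∈ (0,1), c > 0, and λ ∈ 𝔻² with ‖τ − λ‖_∞ ≤ c(1 − ‖λ‖_∞). Then the model vector u_{y,λ} = (√y(1 − τ̄²λ²), √(1−y)(1 − τ̄¹λ¹))/(1 − τ̄¹λ¹(1−y) − τ̄²λ²y) ∈ ℂ² satisfies ‖u_{y,λ}‖ ≤ 2c√(y(1−y)) + 1 ≤ c + 1. In particular u_{y,λ} is bounded on every set approaching τ nontangentially, so τ is a B-point for the model (ℂ², u_y) of φ_y. -/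
open Complex Filter Set

open scoped ComplexConjugate

/-! With `A = 1 - τ̄¹λ¹` and `B = 1 - τ̄²λ²` the denominator is the convex combination
`D = (1 - y) A + y B`, and `‖u_{y,λ}‖² = ((1 - y)|A|² + y|B|²) / |D|²`. The variance identity
`(1 - y)|A|² + y|B|² = |D|² + y(1 - y)|A - B|²` gives `‖u_{y,λ}‖ ≤ 1 + √(y(1-y)) |A - B| / |D|`.
Nontangential approach bounds `|A|, |B| ≤ c(1 - ‖λ‖_∞)` from above and `Re A, Re B`, hence `|D|`,
by `1 - ‖λ‖_∞` from below, so `|A - B| / |D| ≤ 2c`. -/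

section VarianceIdentity

variable {E : Type*} [NormedAddCommGroup E] [InnerProductSpace ℝ E]

theorem one_sub_mul_sq_norm_add_mul_sq_norm (y : ℝ) (a b : E) :
    (1 - y) * ‖a‖ ^ 2 + y * ‖b‖ ^ 2 =
      ‖(1 - y) • a + y • b‖ ^ 2 + y * (1 - y) * ‖a - b‖ ^ 2 := by
  rw [norm_add_sq_real, norm_sub_sq_real, norm_smul, norm_smul, inner_smul_left,
    inner_smul_right, mul_pow, mul_pow, Real.norm_eq_abs, Real.norm_eq_abs, sq_abs, sq_abs]
  simp only [conj_trivial]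
  ring

theorem sqrt_one_sub_mul_sq_norm_add_mul_sq_norm_le {y : ℝ} (hy0 : 0 ≤ y) (hy1 : y ≤ 1)
    (a b : E) :
    √((1 - y) * ‖a‖ ^ 2 + y * ‖b‖ ^ 2) ≤
      ‖(1 - y) • a + y • b‖ + √(y * (1 - y)) * ‖a - b‖ := by
  have hsq : √(y * (1 - y)) ^ 2 = y * (1 - y) := Real.sq_sqrt (by nlinarith)
  rw [Real.sqrt_le_left (by positivity), one_sub_mul_sq_norm_add_mul_sq_norm]
  nlinarith [mul_nonneg (norm_nonneg ((1 - y) • a + y • b))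
    (mul_nonneg (Real.sqrt_nonneg (y * (1 - y))) (norm_nonneg (a - b)))]

end VarianceIdentity

theorem sqrt_mul_one_sub_le_half (y : ℝ) : √(y * (1 - y)) ≤ 1 / 2 :=
  Real.sqrt_le_iff.mpr ⟨by norm_num, by nlinarith [sq_nonneg (2 * y - 1)]⟩

namespace Complex

theorem norm_one_sub_conj_mul {τ : ℂ} (hτ : ‖τ‖ = 1) (w : ℂ) :
    ‖1 - conj τ * w‖ = ‖τ - w‖ := by
  have hconj : conj τ * τ = 1 := by
    rw [mul_comm, mul_conj, normSq_eq_norm_sq, hτ, one_pow, ofReal_one]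
  rw [← hconj, ← mul_sub, norm_mul, RCLike.norm_conj, hτ, one_mul]

theorem one_sub_norm_le_re_one_sub_conj_mul {τ : ℂ} (hτ : ‖τ‖ ≤ 1) (w : ℂ) :
    1 - ‖w‖ ≤ (1 - conj τ * w).re := by
  have hre : (conj τ * w).re ≤ ‖w‖ :=
    calc (conj τ * w).re ≤ ‖conj τ * w‖ := re_le_norm _
      _ = ‖τ‖ * ‖w‖ := by rw [norm_mul, RCLike.norm_conj]
      _ ≤ ‖w‖ := mul_le_of_le_one_left (norm_nonneg w) hτ
  rw [sub_re, one_re]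
  linarith

theorem sq_norm_ofReal_sqrt_mul_div {r : ℝ} (hr : 0 ≤ r) (a b : ℂ) :
    ‖(√r : ℂ) * a / b‖ ^ 2 = r * ‖a‖ ^ 2 / ‖b‖ ^ 2 := by
  rw [norm_div, norm_mul, norm_real, Real.norm_of_nonneg (Real.sqrt_nonneg r), div_pow, mul_pow,
    Real.sq_sqrt hr]

theorem sqrt_one_sub_mul_sq_norm_add_mul_sq_norm_div_le {y : ℝ} (hy0 : 0 ≤ y) (hy1 : y ≤ 1)
    {A B : ℂ} {t c : ℝ} (ht : 0 < t) (hAre : t ≤ A.re) (hBre : t ≤ B.re)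
    (hA : ‖A‖ ≤ c * t) (hB : ‖B‖ ≤ c * t) :
    √((1 - y) * ‖A‖ ^ 2 + y * ‖B‖ ^ 2) / ‖(1 - y) • A + y • B‖ ≤
      2 * c * √(y * (1 - y)) + 1 := by
  set D := (1 - y) • A + y • B
  have hDt : t ≤ ‖D‖ :=
    calc t = (1 - y) * t + y * t := by ring
      _ ≤ (1 - y) * A.re + y * B.re := by gcongr
      _ = D.re := by simp [D]
      _ ≤ ‖D‖ := re_le_norm D
  have hD : 0 < ‖D‖ := ht.trans_le hDt
  have hc : 0 ≤ c := nonneg_of_mul_nonneg_left ((norm_nonneg A).trans hA) ht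
  have hAB : ‖A - B‖ ≤ 2 * c * ‖D‖ :=
    calc ‖A - B‖ ≤ ‖A‖ + ‖B‖ := norm_sub_le A B
      _ ≤ 2 * c * t := by linarith
      _ ≤ 2 * c * ‖D‖ := by gcongr
  calc √((1 - y) * ‖A‖ ^ 2 + y * ‖B‖ ^ 2) / ‖D‖
      ≤ (‖D‖ + √(y * (1 - y)) * ‖A - B‖) / ‖D‖ := by
        gcongr; exact sqrt_one_sub_mul_sq_norm_add_mul_sq_norm_le hy0 hy1 A B
    _ ≤ (‖D‖ + √(y * (1 - y)) * (2 * c * ‖D‖)) / ‖D‖ := by gcongr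
    _ = 2 * c * √(y * (1 - y)) + 1 := by field_simp; ring

end Complex

theorem model_denominator_eq (τ : ℂ × ℂ) (y : ℝ) (z : ℂ × ℂ) :
    1 - conj τ.1 * z.1 * (1 - (y : ℂ)) - conj τ.2 * z.2 * (y : ℂ) =
      (1 - y) • (1 - conj τ.1 * z.1) + y • (1 - conj τ.2 * z.2) := by
  simp only [real_smul, ofReal_sub, ofReal_one]
  ring

theorem sqrt_sq_norm_u1_add_sq_norm_u2_le (τ : ℂ × ℂ) (hτ1 : ‖τ.1‖ = 1) (hτ2 : ‖τ.2‖ = 1)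
    {y : ℝ} (hy0 : 0 ≤ y) (hy1 : y ≤ 1) {c : ℝ} {z : ℂ × ℂ} (hz : ‖z‖ < 1)
    (hzc : ‖τ - z‖ ≤ c * (1 - ‖z‖)) :
    √(‖u1 τ y z‖ ^ 2 + ‖u2 τ y z‖ ^ 2) ≤ 2 * c * √(y * (1 - y)) + 1 := by
  have hnorm : √(‖u1 τ y z‖ ^ 2 + ‖u2 τ y z‖ ^ 2) =
      √((1 - y) * ‖1 - conj τ.1 * z.1‖ ^ 2 + y * ‖1 - conj τ.2 * z.2‖ ^ 2) /
        ‖(1 - y) • (1 - conj τ.1 * z.1) + y • (1 - conj τ.2 * z.2)‖ := by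
    rw [u1, u2, sq_norm_ofReal_sqrt_mul_div hy0, sq_norm_ofReal_sqrt_mul_div (by linarith),
      model_denominator_eq, ← add_div, add_comm (y * _), Real.sqrt_div' _ (sq_nonneg _),
      Real.sqrt_sq (norm_nonneg _)]
  rw [hnorm]
  refine sqrt_one_sub_mul_sq_norm_add_mul_sq_norm_div_le hy0 hy1 (t := 1 - ‖z‖) (by linarith)
    (one_sub_norm_le_re_one_sub_conj_mul hτ1.le _ |>.trans' ?_)
    (one_sub_norm_le_re_one_sub_conj_mul hτ2.le _ |>.trans' ?_)
    ((norm_one_sub_conj_mul hτ1 _).trans_le ?_) ((norm_one_sub_conj_mul hτ2 _).trans_le ?_)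
  · linarith [norm_fst_le z]
  · linarith [norm_snd_le z]
  · exact (norm_fst_le (τ - z)).trans hzc
  · exact (norm_snd_le (τ - z)).trans hzc

theorem stmt11_general (τ : ℂ × ℂ) (hτ1 : ‖τ.1‖ = 1) (hτ2 : ‖τ.2‖ = 1)
    (y : ℝ) (hy0 : 0 < y) (hy1 : y < 1) (c : ℝ) :
    (∀ z : ℂ × ℂ, ‖z‖ < 1 → ‖τ - z‖ ≤ c * (1 - ‖z‖) →
      Real.sqrt (‖u1 τ y z‖ ^ 2 + ‖u2 τ y z‖ ^ 2) ≤ 2 * c * Real.sqrt (y * (1 - y)) + 1 ∧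
      2 * c * Real.sqrt (y * (1 - y)) + 1 ≤ c + 1) ∧
    -- hence `τ` is a `B`-point for the model `(ℂ², u_y)` of `φ_y`
    ∀ S : Set (ℂ × ℂ), S ⊆ {z : ℂ × ℂ | ‖z‖ < 1} →
      (∀ z ∈ S, ‖τ - z‖ ≤ c * (1 - ‖z‖)) →
      ∃ C : ℝ, ∀ z ∈ S, Real.sqrt (‖u1 τ y z‖ ^ 2 + ‖u2 τ y z‖ ^ 2) ≤ C := by
  have hbound {z : ℂ × ℂ} (hz : ‖z‖ < 1) (hzc : ‖τ - z‖ ≤ c * (1 - ‖z‖)) :=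
    sqrt_sq_norm_u1_add_sq_norm_u2_le τ hτ1 hτ2 hy0.le hy1.le hz hzc
  refine ⟨fun z hz hzc => ⟨hbound hz hzc, ?_⟩,
    fun S hS hSc => ⟨_, fun z hzS => hbound (hS hzS) (hSc z hzS)⟩⟩
  have hc : 0 ≤ c := nonneg_of_mul_nonneg_left ((norm_nonneg _).trans hzc) (by linarith)
  nlinarith [sqrt_mul_one_sub_le_half y]

theorem stmt11 (τ : ℂ × ℂ) (hτ1 : ‖τ.1‖ = 1) (hτ2 : ‖τ.2‖ = 1)
    (y : ℝ) (hy0 : 0 < y) (hy1 : y < 1) (c : ℝ) (hc : 0 < c) :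
    (∀ z : ℂ × ℂ, ‖z‖ < 1 → ‖τ - z‖ ≤ c * (1 - ‖z‖) →
      Real.sqrt (‖u1 τ y z‖ ^ 2 + ‖u2 τ y z‖ ^ 2) ≤ 2 * c * Real.sqrt (y * (1 - y)) + 1 ∧
      2 * c * Real.sqrt (y * (1 - y)) + 1 ≤ c + 1) ∧
    -- hence `τ` is a `B`-point for the model `(ℂ², u_y)` of `φ_y`
    ∀ S : Set (ℂ × ℂ), S ⊆ {z : ℂ × ℂ | ‖z‖ < 1} →
      (∀ z ∈ S, ‖τ - z‖ ≤ c * (1 - ‖z‖)) →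
      ∃ C : ℝ, ∀ z ∈ S, Real.sqrt (‖u1 τ y z‖ ^ 2 + ‖u2 τ y z‖ ^ 2) ≤ C :=
  stmt11_general τ hτ1 hτ2 y hy0 hy1 c
end

section
/- Let M be a complex Hilbert space, P an orthogonal projection on M, and τ ∈ 𝕋². Then for all λ, μ ∈ 𝔻², 1 − I_P(μ)* I_P(λ) = (1 − conj(μ¹)λ¹)P + (1 − conj(μ²)λ²)(1−P). Consequently, if φ is holomorphic on 𝔻² with |φ| ≤ 1 and v : 𝔻² → M satisfies the generalized model equation 1 − conj(φ(μ))φ(λ) = ⟨(1 − I_P(μ)* I_P(λ)) v_λ, v_μ⟩ for all λ, μ ∈ 𝔻², then 1 − conj(φ(μ))φ(λ) = (1 − conj(μ¹)λ¹)⟨P v_λ, P v_μ⟩ + (1 − conj(μ²)λ²)⟨(1−P) v_λ, (1−P) v_μ⟩; that is, the generalized model is a standard model. -/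
/-!
At an orthogonal projection `P`, the denominator `1 - τ̄¹λ¹(1 - P) - τ̄²λ²P` of `I_P(λ)` is the
invertible diagonal operator `(1 - τ̄²λ²)P + (1 - τ̄¹λ¹)(1 - P)` and the numerator factors through
it, so `I_P(λ) = τ̄¹λ¹P + τ̄²λ²(1 - P)`. Since `P` and `1 - P` are complementary orthogonal
projections, `I_P(μ)* I_P(λ)` is then diagonal too, with entries `μ̄ʲλʲ` because `|τʲ| = 1`.
Pairing `1 - I_P(μ)* I_P(λ)` against `v_λ, v_μ` splits the model equation along `P` and `1 - P`.
-/

open Complex Filter Set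

section IdempotentCalculus

variable {𝕜 A : Type*} [Ring A] {p : A}

theorem IsIdempotentElem.smul_add_smul_one_sub_mul [CommSemiring 𝕜] [Algebra 𝕜 A]
    (hp : IsIdempotentElem p) (a b c d : 𝕜) :
    (a • p + b • (1 - p)) * (c • p + d • (1 - p)) = (a * c) • p + (b * d) • (1 - p) := by
  simp only [add_mul, mul_add, smul_mul_smul, hp.eq, hp.one_sub.eq, hp.mul_one_sub_self,
    hp.one_sub_mul_self, smul_zero, add_zero, zero_add]

theorem one_sub_smul_add_smul_one_sub [CommRing 𝕜] [Algebra 𝕜 A] (p : A) (a b : 𝕜) :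
    1 - (a • p + b • (1 - p)) = (1 - a) • p + (1 - b) • (1 - p) := by
  module

variable [Field 𝕜] [Algebra 𝕜 A]

theorem IsIdempotentElem.isUnit_smul_add_smul_one_sub (hp : IsIdempotentElem p) {a b : 𝕜}
    (ha : a ≠ 0) (hb : b ≠ 0) : IsUnit (a • p + b • (1 - p)) := by
  have hone : (1 : 𝕜) • p + (1 : 𝕜) • (1 - p) = 1 := by module
  refine ⟨⟨_, a⁻¹ • p + b⁻¹ • (1 - p), ?_, ?_⟩, rfl⟩ <;>
    rw [hp.smul_add_smul_one_sub_mul] <;> field_simp <;> exact hone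

theorem IsIdempotentElem.mul_ring_inverse_eq (hp : IsIdempotentElem p) {a b : 𝕜}
    (ha : a ≠ 1) (hb : b ≠ 1) :
    (a • p + b • (1 - p) - (a * b) • (1 : A)) * Ring.inverse (1 - a • (1 - p) - b • p) =
      a • p + b • (1 - p) := by
  have hden : (1 : A) - a • (1 - p) - b • p = (1 - b) • p + (1 - a) • (1 - p) := by module
  have hnum : a • p + b • (1 - p) - (a * b) • (1 : A) =
      (a • p + b • (1 - p)) * ((1 - b) • p + (1 - a) • (1 - p)) := by
    rw [hp.smul_add_smul_one_sub_mul]; module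
  have hunit := hp.isUnit_smul_add_smul_one_sub (sub_ne_zero.2 hb.symm) (sub_ne_zero.2 ha.symm)
  rw [hden, hnum, mul_assoc, Ring.mul_inverse_cancel _ hunit, mul_one]

end IdempotentCalculus

theorem IsStarProjection.star_smul_add_smul_one_sub {R A : Type*} [CommSemiring R] [StarRing R]
    [Ring A] [StarRing A] [Algebra R A] [StarModule R A] {p : A} (hp : IsStarProjection p)
    (a b : R) : star (a • p + b • (1 - p)) = star a • p + star b • (1 - p) := by
  rw [star_add, star_smul, star_smul, hp.isSelfAdjoint.star_eq, hp.one_sub.isSelfAdjoint.star_eq]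

section Unimodular

variable {𝕜 : Type*} [RCLike 𝕜] {u : 𝕜}

theorem conj_mul_ne_one_of_norm_eq_one (hu : ‖u‖ = 1) {w : 𝕜} (hw : ‖w‖ < 1) :
    starRingEnd 𝕜 u * w ≠ 1 := by
  intro h
  have := congrArg norm h
  rw [norm_mul, RCLike.norm_conj, hu, one_mul, norm_one] at this
  exact hw.ne this

theorem star_conj_mul_mul_conj_mul_of_norm_eq_one (hu : ‖u‖ = 1) (w z : 𝕜) :
    star (starRingEnd 𝕜 u * w) * (starRingEnd 𝕜 u * z) = starRingEnd 𝕜 w * z := by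
  have hu' : u * starRingEnd 𝕜 u = 1 := by
    rw [RCLike.mul_conj, hu]; norm_num
  simp only [star_mul', RCLike.star_def, RCLike.conj_conj]
  linear_combination starRingEnd 𝕜 w * z * hu'

end Unimodular

section InnerProduct

variable {𝕜 M : Type*} [RCLike 𝕜] [NormedAddCommGroup M] [InnerProductSpace 𝕜 M]
  [CompleteSpace M] {P : M →L[𝕜] M}

theorem IsStarProjection.inner_apply_right (hP : IsStarProjection P) (x y : M) :
    inner 𝕜 x (P y) = inner 𝕜 (P x) (P y) := by
  have hPP : P (P y) = P y := DFunLike.congr_fun hP.isIdempotentElem.eq y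
  calc inner 𝕜 x (P y) = inner 𝕜 x (P (P y)) := by rw [hPP]
    _ = inner 𝕜 (P x) (P y) := by
      rw [← ContinuousLinearMap.adjoint_inner_left, hP.isSelfAdjoint.adjoint_eq]

theorem IsStarProjection.inner_smul_add_smul_one_sub_apply (hP : IsStarProjection P) (a b : 𝕜)
    (x y : M) :
    inner 𝕜 x ((a • P + b • (1 - P)) y) =
      a * inner 𝕜 (P x) (P y) + b * inner 𝕜 ((1 - P) x) ((1 - P) y) := by
  rw [add_apply, smul_apply, smul_apply, inner_add_right, inner_smul_right, inner_smul_right,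
    hP.inner_apply_right, hP.one_sub.inner_apply_right]

end InnerProduct

section ModelFunction

variable {M : Type*} [NormedAddCommGroup M] [InnerProductSpace ℂ M] [CompleteSpace M]
  {P : M →L[ℂ] M}

theorem IY_of_isIdempotentElem (hP : IsIdempotentElem P) {τ z : ℂ × ℂ}
    (h₁ : starRingEnd ℂ τ.1 * z.1 ≠ 1) (h₂ : starRingEnd ℂ τ.2 * z.2 ≠ 1) :
    IY P τ z = (starRingEnd ℂ τ.1 * z.1) • P + (starRingEnd ℂ τ.2 * z.2) • (1 - P) := by
  have hab : starRingEnd ℂ τ.1 * starRingEnd ℂ τ.2 * z.1 * z.2 =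
      (starRingEnd ℂ τ.1 * z.1) * (starRingEnd ℂ τ.2 * z.2) := by ring
  rw [IY, hab, hP.mul_ring_inverse_eq h₁ h₂]

theorem one_sub_adjoint_IY_mul_IY (hP : IsStarProjection P) {τ : ℂ × ℂ} (hτ₁ : ‖τ.1‖ = 1)
    (hτ₂ : ‖τ.2‖ = 1) {zl zm : ℂ × ℂ} (hzl : ‖zl‖ < 1) (hzm : ‖zm‖ < 1) :
    1 - ContinuousLinearMap.adjoint (IY P τ zm) * IY P τ zl =
      (1 - starRingEnd ℂ zm.1 * zl.1) • P + (1 - starRingEnd ℂ zm.2 * zl.2) • (1 - P) := by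
  have hIY {z : ℂ × ℂ} (hz : ‖z‖ < 1) := IY_of_isIdempotentElem hP.isIdempotentElem
    (z := z) (conj_mul_ne_one_of_norm_eq_one hτ₁ ((norm_fst_le z).trans_lt hz))
    (conj_mul_ne_one_of_norm_eq_one hτ₂ ((norm_snd_le z).trans_lt hz))
  rw [hIY hzl, hIY hzm, ← ContinuousLinearMap.star_eq_adjoint, hP.star_smul_add_smul_one_sub,
    hP.isIdempotentElem.smul_add_smul_one_sub_mul, star_conj_mul_mul_conj_mul_of_norm_eq_one hτ₁,
    star_conj_mul_mul_conj_mul_of_norm_eq_one hτ₂, one_sub_smul_add_smul_one_sub]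

end ModelFunction


theorem stmt13 {M : Type*} [NormedAddCommGroup M] [InnerProductSpace ℂ M] [CompleteSpace M]
    (P : M →L[ℂ] M) (hPsa : IsSelfAdjoint P) (hPidem : IsIdempotentElem P)
    (τ : ℂ × ℂ) (hτ1 : ‖τ.1‖ = 1) (hτ2 : ‖τ.2‖ = 1) :
    (∀ zl zm : ℂ × ℂ, ‖zl‖ < 1 → ‖zm‖ < 1 →
      (1 : M →L[ℂ] M) - ContinuousLinearMap.adjoint (IY P τ zm) * IY P τ zl =
        (1 - starRingEnd ℂ zm.1 * zl.1) • P
          + (1 - starRingEnd ℂ zm.2 * zl.2) • ((1 : M →L[ℂ] M) - P)) ∧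
    ∀ (φ : ℂ × ℂ → ℂ), DifferentiableOn ℂ φ {z : ℂ × ℂ | ‖z‖ < 1} →
      (∀ z : ℂ × ℂ, ‖z‖ < 1 → ‖φ z‖ ≤ 1) →
      ∀ v : ℂ × ℂ → M,
      (∀ zl zm : ℂ × ℂ, ‖zl‖ < 1 → ‖zm‖ < 1 →
        (1 : ℂ) - starRingEnd ℂ (φ zm) * φ zl =
          (inner ℂ (v zm)
            ((((1 : M →L[ℂ] M) - ContinuousLinearMap.adjoint (IY P τ zm) * IY P τ zl)) (v zl)) : ℂ)) →
      ∀ zl zm : ℂ × ℂ, ‖zl‖ < 1 → ‖zm‖ < 1 →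
        (1 : ℂ) - starRingEnd ℂ (φ zm) * φ zl =
          (1 - starRingEnd ℂ zm.1 * zl.1) * (inner ℂ (P (v zm)) (P (v zl)) : ℂ)
          + (1 - starRingEnd ℂ zm.2 * zl.2) *
              (inner ℂ (((1 : M →L[ℂ] M) - P) (v zm)) (((1 : M →L[ℂ] M) - P) (v zl)) : ℂ) := by
  have hP : IsStarProjection P := ⟨hPidem, hPsa⟩
  refine ⟨fun zl zm hzl hzm => one_sub_adjoint_IY_mul_IY hP hτ1 hτ2 hzl hzm,
    fun φ _ _ v hv zl zm hzl hzm => ?_⟩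
  rw [hv zl zm hzl hzm, one_sub_adjoint_IY_mul_IY hP hτ1 hτ2 hzl hzm,
    hP.inner_smul_add_smul_one_sub_apply]
end

section
/- Let φ be holomorphic on 𝔻² with |φ| ≤ 1 and τ ∈ 𝕋². Suppose φ has a generalized model (M, v, I_P) at τ in which the positive contraction is an orthogonal projection P, and the model has a C-point at τ. Then τ is a carapoint for φ and φ is nontangentially differentiable at τ: there exist φ(τ) ∈ ℂ and a ℂ-linear map L : ℂ² → ℂ such that for every δ ∈ ℂ² with Re(τ̄¹δ¹) < 0 and Re(τ̄²δ²) < 0, lim_{t→0⁺} (φ(τ+tδ) − φ(τ))/t exists and equals L(δ). -/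
open Complex Filter Set

/-!
For a projection `P`, `I_P(λ) = τ̄¹λ¹ P + τ̄²λ² (1 - P)` is block diagonal, so the model is an Agler
decomposition `1 - conj φ(μ) φ(λ) = (1 - μ̄¹λ¹) ⟨P v_λ, v_μ⟩ + (1 - μ̄²λ²) ⟨(1 - P) v_λ, v_μ⟩`.
Letting `μ → τ` radially, `v_μ → v_τ` makes the right side converge for every `λ`, and on the
diagonal it tends to `0`. Hence `φ(μ)` converges to some `φ(τ)` of modulus one and
`φ(λ) = φ(τ) (1 - (1 - τ̄¹λ¹) ⟨P v_λ, v_τ⟩ - (1 - τ̄²λ²) ⟨(1 - P) v_λ, v_τ⟩)` on the whole bidisk.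
On a ray `λ = τ + tδ` pointing into the bidisk, `1 - τ̄ʲλʲ = -t τ̄ʲδʲ`, so the difference quotient
converges because `v` has a limit along the ray; the radial ray `δ = -τ` gives the carapoint.
-/

open scoped Topology InnerProductSpace

theorem Complex.conj_mul_self_of_norm_eq_one_s14 {x : ℂ} (hx : ‖x‖ = 1) : starRingEnd ℂ x * x = 1 := by
  rw [Complex.conj_mul', hx]; norm_num

theorem Complex.re_conj_mul_neg_lt_zero {x : ℂ} (hx : ‖x‖ = 1) :
    (starRingEnd ℂ x * -x).re < 0 := by
  simp [Complex.conj_mul_self_of_norm_eq_one_s14 hx]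

theorem Complex.conj_mul_ne_one {x z : ℂ} (hx : ‖x‖ = 1) (hz : ‖z‖ < 1) :
    starRingEnd ℂ x * z ≠ 1 := by
  intro h
  have := congrArg norm h
  rw [norm_mul, Complex.norm_conj, hx, one_mul, norm_one] at this
  exact hz.ne this

section BlockDiag

variable {𝕜 R : Type*} [CommRing 𝕜] [Ring R] [Algebra 𝕜 R]

def blockDiag (P : R) (a b : 𝕜) : R := a • P + b • (1 - P)

theorem blockDiag_one_one (P : R) : blockDiag P (1 : 𝕜) 1 = 1 := by
  simp [blockDiag]

theorem blockDiag_sub_blockDiag (P : R) (a b c d : 𝕜) :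
    blockDiag P a b - blockDiag P c d = blockDiag P (a - c) (b - d) := by
  simp only [blockDiag]
  module

theorem blockDiag_mul_mul (P : R) (c a b : 𝕜) :
    blockDiag P (c * a) (c * b) = c • blockDiag P a b := by
  simp only [blockDiag]
  module

variable {P : R}

theorem IsIdempotentElem.blockDiag_mul_blockDiag (hP : IsIdempotentElem P) (a b c d : 𝕜) :
    blockDiag P a b * blockDiag P c d = blockDiag P (a * c) (b * d) := by
  simp only [blockDiag, add_mul, mul_add, smul_mul_smul_comm, hP.eq, hP.one_sub.eq,
    hP.mul_one_sub_self, hP.one_sub_mul_self, smul_zero, add_zero, zero_add]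

theorem IsSelfAdjoint.star_blockDiag [StarRing 𝕜] [StarRing R] [StarModule 𝕜 R]
    (hP : IsSelfAdjoint P) (a b : 𝕜) :
    star (blockDiag P a b) = blockDiag P (star a) (star b) := by
  simp [blockDiag, hP.star_eq]

end BlockDiag

theorem IsIdempotentElem.isUnit_blockDiag {𝕜 R : Type*} [Field 𝕜] [Ring R] [Algebra 𝕜 R] {P : R}
    (hP : IsIdempotentElem P) {a b : 𝕜} (ha : a ≠ 0) (hb : b ≠ 0) :
    IsUnit (blockDiag P a b) :=
  ⟨⟨blockDiag P a b, blockDiag P a⁻¹ b⁻¹,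
    by rw [hP.blockDiag_mul_blockDiag, mul_inv_cancel₀ ha, mul_inv_cancel₀ hb, blockDiag_one_one],
    by rw [hP.blockDiag_mul_blockDiag, inv_mul_cancel₀ ha, inv_mul_cancel₀ hb,
      blockDiag_one_one]⟩, rfl⟩

section AglerKernel

variable {R : Type*} [Ring R] [Algebra ℂ R] (P : R)

def aglerKernel (w z : ℂ × ℂ) : R :=
  blockDiag P (1 - starRingEnd ℂ w.1 * z.1) (1 - starRingEnd ℂ w.2 * z.2)

theorem aglerKernel_add_smul {τ : ℂ × ℂ} (hτ₁ : ‖τ.1‖ = 1) (hτ₂ : ‖τ.2‖ = 1) (δ : ℂ × ℂ) (c : ℂ) :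
    aglerKernel P τ (τ + c • δ) =
      (-c) • blockDiag P (starRingEnd ℂ τ.1 * δ.1) (starRingEnd ℂ τ.2 * δ.2) := by
  have h₁ := Complex.conj_mul_self_of_norm_eq_one_s14 hτ₁
  have h₂ := Complex.conj_mul_self_of_norm_eq_one_s14 hτ₂
  rw [aglerKernel, ← blockDiag_mul_mul]
  simp only [Prod.fst_add, Prod.snd_add, Prod.smul_fst, Prod.smul_snd, smul_eq_mul]
  congr 1
  · linear_combination -h₁
  · linear_combination -h₂

theorem aglerKernel_self {τ : ℂ × ℂ} (hτ₁ : ‖τ.1‖ = 1) (hτ₂ : ‖τ.2‖ = 1) :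
    aglerKernel P τ τ = 0 := by
  simpa using aglerKernel_add_smul P hτ₁ hτ₂ 0 0

end AglerKernel

section Model

variable {M : Type*} [NormedAddCommGroup M] [InnerProductSpace ℂ M] [CompleteSpace M]
  {P : M →L[ℂ] M}

theorem IY_eq_blockDiag (hP : IsIdempotentElem P) {τ z : ℂ × ℂ}
    (h₁ : starRingEnd ℂ τ.1 * z.1 ≠ 1) (h₂ : starRingEnd ℂ τ.2 * z.2 ≠ 1) :
    IY P τ z = blockDiag P (starRingEnd ℂ τ.1 * z.1) (starRingEnd ℂ τ.2 * z.2) := by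
  set a := starRingEnd ℂ τ.1 * z.1
  set b := starRingEnd ℂ τ.2 * z.2
  have hden : (1 : M →L[ℂ] M) - a • (1 - P) - b • P = blockDiag P (1 - b) (1 - a) := by
    simp only [blockDiag]
    module
  have hnum : a • P + b • (1 - P) - (starRingEnd ℂ τ.1 * starRingEnd ℂ τ.2 * z.1 * z.2) • 1 =
      blockDiag P a b * blockDiag P (1 - b) (1 - a) := by
    rw [hP.blockDiag_mul_blockDiag]
    simp only [blockDiag]
    module
  rw [IY, hden, hnum, Ring.mul_inverse_cancel_right _ _
    (hP.isUnit_blockDiag (sub_ne_zero.2 (Ne.symm h₂)) (sub_ne_zero.2 (Ne.symm h₁)))]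

theorem one_sub_adjoint_IY_mul_IY_s14 (hP : IsIdempotentElem P) (hPsa : IsSelfAdjoint P)
    {τ z w : ℂ × ℂ} (hτ₁ : ‖τ.1‖ = 1) (hτ₂ : ‖τ.2‖ = 1) (hz : ‖z‖ < 1) (hw : ‖w‖ < 1) :
    1 - ContinuousLinearMap.adjoint (IY P τ w) * IY P τ z = aglerKernel P w z := by
  have hI : ∀ u : ℂ × ℂ, ‖u‖ < 1 →
      IY P τ u = blockDiag P (starRingEnd ℂ τ.1 * u.1) (starRingEnd ℂ τ.2 * u.2) :=
    fun u hu => IY_eq_blockDiag hP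
      (Complex.conj_mul_ne_one hτ₁ ((norm_fst_le u).trans_lt hu))
      (Complex.conj_mul_ne_one hτ₂ ((norm_snd_le u).trans_lt hu))
  rw [hI z hz, hI w hw, ← ContinuousLinearMap.star_eq_adjoint, hPsa.star_blockDiag,
    hP.blockDiag_mul_blockDiag, ← blockDiag_one_one (𝕜 := ℂ) P, blockDiag_sub_blockDiag,
    aglerKernel]
  have h₁ := Complex.conj_mul_self_of_norm_eq_one_s14 hτ₁
  have h₂ := Complex.conj_mul_self_of_norm_eq_one_s14 hτ₂
  simp only [star_mul', RCLike.star_def, Complex.conj_conj]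
  congr 2
  · linear_combination (starRingEnd ℂ w.1 * z.1) * h₁
  · linear_combination (starRingEnd ℂ w.2 * z.2) * h₂

end Model

theorem exists_norm_eq_one_eq_mul_of_tendsto {α β : Type*} {F : Filter α} [F.NeBot]
    {μ : α → β} {s : Set β} {g h : β → ℂ} (hμ : ∀ᶠ a in F, μ a ∈ s)
    (hlim : ∀ b ∈ s, Tendsto (fun a => starRingEnd ℂ (g (μ a)) * g b) F (𝓝 (h b)))
    (hdiag : Tendsto (fun a => starRingEnd ℂ (g (μ a)) * g (μ a)) F (𝓝 1)) :
    ∃ c : ℂ, ‖c‖ = 1 ∧ ∀ b ∈ s, g b = c * h b := by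
  -- `|g (μ a)|² → 1` provides a point `b₀ = μ a₀` of `s` with `g b₀ ≠ 0`; dividing by `g b₀`
  -- shows that `conj (g (μ a))` itself converges.
  obtain ⟨a₀, hne, ha₀⟩ := ((hdiag.eventually_ne one_ne_zero).and hμ).exists
  have hg₀ : g (μ a₀) ≠ 0 := fun h₀ => hne (by simp [h₀])
  set w := h (μ a₀) / g (μ a₀)
  have hconj : Tendsto (fun a => starRingEnd ℂ (g (μ a))) F (𝓝 w) :=
    ((hlim _ ha₀).div_const (g (μ a₀))).congr fun a => mul_div_cancel_right₀ _ hg₀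
  have hw : ∀ b ∈ s, w * g b = h b := fun b hb =>
    tendsto_nhds_unique (hconj.mul_const _) (hlim b hb)
  have hg : Tendsto (fun a => g (μ a)) F (𝓝 (starRingEnd ℂ w)) :=
    ((Complex.continuous_conj.tendsto w).comp hconj).congr fun a => Complex.conj_conj _
  have hww : w * starRingEnd ℂ w = 1 := tendsto_nhds_unique (hconj.mul hg) hdiag
  refine ⟨starRingEnd ℂ w, ?_, fun b hb => ?_⟩
  · rw [Complex.mul_conj'] at hww
    rw [Complex.norm_conj]
    exact (pow_eq_one_iff_of_nonneg (norm_nonneg w) two_ne_zero).1 (by exact_mod_cast hww)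
  · rw [← hw b hb, ← mul_assoc, mul_comm _ w, hww, one_mul]

theorem Complex.eventually_norm_add_mul_le {x d : ℂ} (hx : ‖x‖ = 1)
    (hd : (starRingEnd ℂ x * d).re < 0) :
    ∀ᶠ t : ℝ in 𝓝[>] 0, ‖x + (t : ℂ) * d‖ ≤ 1 + (starRingEnd ℂ x * d).re * t / 2 := by
  set r := (starRingEnd ℂ x * d).re
  have h₁ : ∀ᶠ t : ℝ in 𝓝[>] 0, t * ‖d‖ ^ 2 < -r :=
    nhdsWithin_le_nhds <| (continuous_id.mul continuous_const).continuousAt.eventually_lt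
      continuousAt_const (by simpa using hd)
  have h₂ : ∀ᶠ t : ℝ in 𝓝[>] 0, -r * t < 2 :=
    nhdsWithin_le_nhds <| (continuous_const.mul continuous_id).continuousAt.eventually_lt
      continuousAt_const (by simp)
  filter_upwards [h₁, h₂, self_mem_nhdsWithin] with t h₁ h₂ (ht : 0 < t)
  have hsq : ‖x + (t : ℂ) * d‖ ^ 2 = 1 + 2 * r * t + t ^ 2 * ‖d‖ ^ 2 := by
    have hre : (x * starRingEnd ℂ ((t : ℂ) * d)).re = t * r := by
      rw [map_mul, Complex.conj_ofReal, mul_left_comm, Complex.re_ofReal_mul, ← Complex.conj_re,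
        map_mul, Complex.conj_conj]
    rw [Complex.sq_norm, Complex.normSq_add, hre, Complex.normSq_mul, Complex.normSq_ofReal,
      Complex.normSq_eq_norm_sq, Complex.normSq_eq_norm_sq, hx]
    ring
  refine le_of_pow_le_pow_left₀ two_ne_zero (by linarith) ?_
  rw [hsq]
  nlinarith [mul_lt_mul_of_pos_left h₁ ht, sq_nonneg (r * t)]

theorem tendsto_add_smul_nhdsGT (τ δ : ℂ × ℂ) :
    Tendsto (fun t : ℝ => τ + (t : ℂ) • δ) (𝓝[>] 0) (𝓝 τ) := by
  have : Continuous fun t : ℝ => τ + (t : ℂ) • δ := by fun_prop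
  simpa using (this.tendsto 0).mono_left nhdsWithin_le_nhds

theorem exists_eventually_stolz_add_smul {τ δ : ℂ × ℂ} (hτ₁ : ‖τ.1‖ = 1) (hτ₂ : ‖τ.2‖ = 1)
    (h₁ : (starRingEnd ℂ τ.1 * δ.1).re < 0) (h₂ : (starRingEnd ℂ τ.2 * δ.2).re < 0) :
    ∃ c > 0, ∀ᶠ t : ℝ in 𝓝[>] 0, ‖τ + (t : ℂ) • δ‖ < 1 ∧
      ‖τ - (τ + (t : ℂ) • δ)‖ ≤ c * (1 - ‖τ + (t : ℂ) • δ‖) := by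
  set m := min (-(starRingEnd ℂ τ.1 * δ.1).re) (-(starRingEnd ℂ τ.2 * δ.2).re)
  have hm : 0 < m := lt_min (neg_pos.2 h₁) (neg_pos.2 h₂)
  have hδ : 0 < ‖δ‖ := norm_pos_iff.2 (by rintro rfl; simp at h₁)
  refine ⟨2 * ‖δ‖ / m, by positivity, ?_⟩
  filter_upwards [Complex.eventually_norm_add_mul_le hτ₁ h₁,
    Complex.eventually_norm_add_mul_le hτ₂ h₂, self_mem_nhdsWithin] with t ht₁ ht₂ (ht : 0 < t)
  have hnorm : ‖τ + (t : ℂ) • δ‖ ≤ 1 - m * t / 2 := by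
    refine max_le (ht₁.trans ?_) (ht₂.trans ?_) <;>
      nlinarith [min_le_left (-(starRingEnd ℂ τ.1 * δ.1).re) (-(starRingEnd ℂ τ.2 * δ.2).re),
        min_le_right (-(starRingEnd ℂ τ.1 * δ.1).re) (-(starRingEnd ℂ τ.2 * δ.2).re)]
  have hdist : ‖τ - (τ + (t : ℂ) • δ)‖ = t * ‖δ‖ := by
    rw [sub_add_cancel_left, norm_neg, norm_smul, Complex.norm_real, Real.norm_of_nonneg ht.le]
  refine ⟨by nlinarith, ?_⟩
  calc ‖τ - (τ + (t : ℂ) • δ)‖ = 2 * ‖δ‖ / m * (m * t / 2) := by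
        rw [hdist]; field_simp
    _ ≤ 2 * ‖δ‖ / m * (1 - ‖τ + (t : ℂ) • δ‖) := by gcongr; linarith

def HasNontangentialLimit {X : Type*} [TopologicalSpace X] (v : ℂ × ℂ → X) (τ : ℂ × ℂ)
    (x : X) : Prop :=
  ∀ S : Set (ℂ × ℂ), S ⊆ {z : ℂ × ℂ | ‖z‖ < 1} →
    (∃ c > 0, ∀ z ∈ S, ‖τ - z‖ ≤ c * (1 - ‖z‖)) → Tendsto v (𝓝[S] τ) (𝓝 x)

theorem HasNontangentialLimit.tendsto_add_smul {X : Type*} [TopologicalSpace X]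
    {v : ℂ × ℂ → X} {τ δ : ℂ × ℂ} {x : X} (hv : HasNontangentialLimit v τ x)
    (hτ₁ : ‖τ.1‖ = 1) (hτ₂ : ‖τ.2‖ = 1)
    (h₁ : (starRingEnd ℂ τ.1 * δ.1).re < 0) (h₂ : (starRingEnd ℂ τ.2 * δ.2).re < 0) :
    Tendsto (fun t : ℝ => v (τ + (t : ℂ) • δ)) (𝓝[>] 0) (𝓝 x) := by
  obtain ⟨c, hc, hev⟩ := exists_eventually_stolz_add_smul hτ₁ hτ₂ h₁ h₂
  refine (hv {z | ‖z‖ < 1 ∧ ‖τ - z‖ ≤ c * (1 - ‖z‖)} (fun z hz => hz.1)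
    ⟨c, hc, fun z hz => hz.2⟩).comp ?_
  exact tendsto_nhdsWithin_iff.2 ⟨tendsto_add_smul_nhdsGT τ δ, hev⟩

section Boundary

variable {M : Type*} [NormedAddCommGroup M] [InnerProductSpace ℂ M]
  {P : M →L[ℂ] M} {φ : ℂ × ℂ → ℂ} {v : ℂ × ℂ → M} {τ : ℂ × ℂ} {vτ : M}

theorem exists_boundary_value (hτ₁ : ‖τ.1‖ = 1) (hτ₂ : ‖τ.2‖ = 1)
    (hkernel : ∀ z w : ℂ × ℂ, ‖z‖ < 1 → ‖w‖ < 1 →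
      1 - starRingEnd ℂ (φ w) * φ z = ⟪v w, aglerKernel P w z (v z)⟫_ℂ)
    (hv : HasNontangentialLimit v τ vτ) :
    ∃ φτ : ℂ, ‖φτ‖ = 1 ∧
      ∀ z : ℂ × ℂ, ‖z‖ < 1 → φ z = φτ * (1 - ⟪vτ, aglerKernel P τ z (v z)⟫_ℂ) := by
  have hr₁ : (starRingEnd ℂ τ.1 * (-τ).1).re < 0 := Complex.re_conj_mul_neg_lt_zero hτ₁
  have hr₂ : (starRingEnd ℂ τ.2 * (-τ).2).re < 0 := Complex.re_conj_mul_neg_lt_zero hτ₂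
  set μ : ℝ → ℂ × ℂ := fun t => τ + (t : ℂ) • (-τ)
  obtain ⟨_, -, hstolz⟩ := exists_eventually_stolz_add_smul hτ₁ hτ₂ hr₁ hr₂
  have hμ : ∀ᶠ t in 𝓝[>] 0, ‖μ t‖ < 1 := hstolz.mono fun _ ht => ht.1
  have hlim : Tendsto (fun t => (μ t, v (μ t))) (𝓝[>] 0) (𝓝 (τ, vτ)) :=
    (tendsto_add_smul_nhdsGT τ (-τ)).prodMk_nhds (hv.tendsto_add_smul hτ₁ hτ₂ hr₁ hr₂)
  refine exists_norm_eq_one_eq_mul_of_tendsto (s := {z | ‖z‖ < 1}) hμ (fun z hz => ?_) ?_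
  · have hcont : Continuous fun p : (ℂ × ℂ) × M => 1 - ⟪p.2, aglerKernel P p.1 z (v z)⟫_ℂ := by
      unfold aglerKernel blockDiag; fun_prop
    refine ((hcont.tendsto _).comp hlim).congr' ?_
    filter_upwards [hμ] with t ht
    rw [Function.comp_apply, ← hkernel z (μ t) hz ht, sub_sub_cancel]
  · have hcont : Continuous fun p : (ℂ × ℂ) × M => 1 - ⟪p.2, aglerKernel P p.1 p.1 p.2⟫_ℂ := by
      unfold aglerKernel blockDiag; fun_prop
    refine (((hcont.tendsto _).comp hlim).congr' ?_).trans_eq (by simp [aglerKernel_self P hτ₁ hτ₂])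
    filter_upwards [hμ] with t ht
    rw [Function.comp_apply, ← hkernel (μ t) (μ t) ht ht, sub_sub_cancel]

theorem tendsto_slope_add_smul {φτ : ℂ} (hτ₁ : ‖τ.1‖ = 1) (hτ₂ : ‖τ.2‖ = 1)
    (hφ : ∀ z : ℂ × ℂ, ‖z‖ < 1 → φ z = φτ * (1 - ⟪vτ, aglerKernel P τ z (v z)⟫_ℂ))
    (hv : HasNontangentialLimit v τ vτ) {δ : ℂ × ℂ}
    (h₁ : (starRingEnd ℂ τ.1 * δ.1).re < 0) (h₂ : (starRingEnd ℂ τ.2 * δ.2).re < 0) :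
    Tendsto (fun t : ℝ => (φ (τ + (t : ℂ) • δ) - φτ) / t) (𝓝[>] 0)
      (𝓝 (φτ * ⟪vτ, blockDiag P (starRingEnd ℂ τ.1 * δ.1) (starRingEnd ℂ τ.2 * δ.2) vτ⟫_ℂ)) := by
  have hcont : Continuous fun x : M =>
      φτ * ⟪vτ, blockDiag P (starRingEnd ℂ τ.1 * δ.1) (starRingEnd ℂ τ.2 * δ.2) x⟫_ℂ := by
    fun_prop
  refine ((hcont.tendsto vτ).comp (hv.tendsto_add_smul hτ₁ hτ₂ h₁ h₂)).congr' ?_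
  obtain ⟨_, -, hev⟩ := exists_eventually_stolz_add_smul hτ₁ hτ₂ h₁ h₂
  filter_upwards [hev, self_mem_nhdsWithin] with t ht (htpos : 0 < t)
  rw [Function.comp_apply, eq_div_iff (Complex.ofReal_ne_zero.2 htpos.ne'), hφ _ ht.1,
    aglerKernel_add_smul P hτ₁ hτ₂, smul_apply, inner_smul_right]
  ring

end Boundary

theorem exists_carapoint_of_tendsto_slope {φ : ℂ × ℂ → ℂ} {τ : ℂ × ℂ} {φτ ℓ : ℂ}
    (hτ₁ : ‖τ.1‖ = 1) (hτ₂ : ‖τ.2‖ = 1) (hφτ : ‖φτ‖ = 1)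
    (h : Tendsto (fun t : ℝ => (φ (τ + (t : ℂ) • (-τ)) - φτ) / t) (𝓝[>] 0) (𝓝 ℓ)) :
    ∃ (l : ℕ → ℂ × ℂ) (C : ℝ), (∀ n, ‖l n‖ < 1) ∧ Tendsto l atTop (𝓝 τ) ∧
      ∀ n, |(1 - ‖φ (l n)‖) / (1 - ‖l n‖)| ≤ C := by
  set s : ℕ → ℝ := fun n => 1 / ((n : ℝ) + 1)
  have hs : ∀ n, 0 < s n ∧ s n ≤ 1 := fun n =>
    ⟨by positivity, div_le_one_of_le₀ (by linarith [n.cast_nonneg (α := ℝ)]) (by positivity)⟩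
  have hs₀ : Tendsto s atTop (𝓝[>] 0) :=
    tendsto_nhdsWithin_iff.2 ⟨tendsto_one_div_add_atTop_nhds_zero_nat,
      Eventually.of_forall fun n => (hs n).1⟩
  have hnorm : ∀ n, ‖τ + (s n : ℂ) • (-τ)‖ = 1 - s n := fun n => by
    rw [show τ + (s n : ℂ) • (-τ) = ((1 - s n : ℝ) : ℂ) • τ by push_cast; module, norm_smul,
      Complex.norm_real, Real.norm_of_nonneg (sub_nonneg.2 (hs n).2), Prod.norm_def, hτ₁, hτ₂,
      max_self, mul_one]
  obtain ⟨C, hC⟩ := (h.comp hs₀).norm.bddAbove_range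
  refine ⟨fun n => τ + (s n : ℂ) • (-τ), C, fun n => by rw [hnorm]; linarith [(hs n).1],
    (tendsto_add_smul_nhdsGT τ (-τ)).comp hs₀, fun n => ?_⟩
  set l := τ + (s n : ℂ) • (-τ)
  calc |(1 - ‖φ l‖) / (1 - ‖l‖)| = |‖φτ‖ - ‖φ l‖| / s n := by
        rw [hnorm, sub_sub_cancel, hφτ, abs_div, abs_of_pos (hs n).1]
    _ ≤ ‖φ l - φτ‖ / s n := by
        gcongr; rw [norm_sub_rev]; exact abs_norm_sub_norm_le _ _
    _ = ‖(φ l - φτ) / (s n : ℂ)‖ := by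
        rw [norm_div, Complex.norm_real, Real.norm_of_nonneg (hs n).1.le]
    _ ≤ C := hC ⟨n, rfl⟩

theorem stmt14_general {M : Type*} [NormedAddCommGroup M] [InnerProductSpace ℂ M] [CompleteSpace M]
    (φ : ℂ × ℂ → ℂ)
    (τ : ℂ × ℂ) (hτ1 : ‖τ.1‖ = 1) (hτ2 : ‖τ.2‖ = 1)
    -- the positive contraction of the model is an orthogonal projection `P`
    (P : M →L[ℂ] M) (hPsa : IsSelfAdjoint P) (hPidem : IsIdempotentElem P)
    (v : ℂ × ℂ → M)
    -- `(M, v, I_P)` is a generalized model for `φ`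
    (hmodel : ∀ zl zm : ℂ × ℂ, ‖zl‖ < 1 → ‖zm‖ < 1 →
      (1 : ℂ) - starRingEnd ℂ (φ zm) * φ zl =
        (inner ℂ (v zm)
          ((((1 : M →L[ℂ] M) - ContinuousLinearMap.adjoint (IY P τ zm) * IY P τ zl)) (v zl)) : ℂ))
    -- the model has a `C`-point at `τ`
    (vτ : M)
    (hC : ∀ S : Set (ℂ × ℂ), S ⊆ {z : ℂ × ℂ | ‖z‖ < 1} →
      (∃ c > 0, ∀ z ∈ S, ‖τ - z‖ ≤ c * (1 - ‖z‖)) →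
      Tendsto v (nhdsWithin τ S) (nhds vτ)) :
    -- `τ` is a carapoint for `φ`
    (∃ (l : ℕ → ℂ × ℂ) (C : ℝ), (∀ n, ‖l n‖ < 1) ∧ Tendsto l atTop (nhds τ) ∧
      ∀ n, |(1 - ‖φ (l n)‖) / (1 - ‖l n‖)| ≤ C) ∧
    -- and `φ` is nontangentially differentiable at `τ`
    ∃ (φτ : ℂ) (L : (ℂ × ℂ) →ₗ[ℂ] ℂ), ∀ δ : ℂ × ℂ,
      (starRingEnd ℂ τ.1 * δ.1).re < 0 → (starRingEnd ℂ τ.2 * δ.2).re < 0 →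
      Tendsto (fun t : ℝ =>
          (φ (τ.1 + (t : ℂ) * δ.1, τ.2 + (t : ℂ) * δ.2) - φτ) / (t : ℂ))
        (nhdsWithin (0 : ℝ) (Set.Ioi 0)) (nhds (L δ)) := by
  obtain ⟨φτ, hφτ, hφ⟩ := exists_boundary_value (P := P) hτ1 hτ2 (fun z w hz hw => by
    rw [hmodel z w hz hw, one_sub_adjoint_IY_mul_IY_s14 hPidem hPsa hτ1 hτ2 hz hw]) hC
  have hslope := fun δ => tendsto_slope_add_smul (δ := δ) hτ1 hτ2 hφ hC
  refine ⟨exists_carapoint_of_tendsto_slope hτ1 hτ2 hφτ (hslope (-τ)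
    (Complex.re_conj_mul_neg_lt_zero hτ1) (Complex.re_conj_mul_neg_lt_zero hτ2)), φτ,
    (φτ * starRingEnd ℂ τ.1 * ⟪vτ, P vτ⟫_ℂ) • LinearMap.fst ℂ ℂ ℂ +
      (φτ * starRingEnd ℂ τ.2 * ⟪vτ, (1 - P) vτ⟫_ℂ) • LinearMap.snd ℂ ℂ ℂ,
    fun δ h₁ h₂ => ?_⟩
  show Tendsto (fun t : ℝ => (φ (τ + (t : ℂ) • δ) - φτ) / t) _ _
  convert hslope δ h₁ h₂ using 2
  simp only [blockDiag, LinearMap.add_apply, LinearMap.smul_apply, LinearMap.fst_apply,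
    LinearMap.snd_apply, add_apply, smul_apply,
    inner_add_right, inner_smul_right, smul_eq_mul]
  ring

theorem stmt14 {M : Type*} [NormedAddCommGroup M] [InnerProductSpace ℂ M] [CompleteSpace M]
    (φ : ℂ × ℂ → ℂ) (hφd : DifferentiableOn ℂ φ {z : ℂ × ℂ | ‖z‖ < 1})
    (hφb : ∀ z : ℂ × ℂ, ‖z‖ < 1 → ‖φ z‖ ≤ 1)
    (τ : ℂ × ℂ) (hτ1 : ‖τ.1‖ = 1) (hτ2 : ‖τ.2‖ = 1)
    -- the positive contraction of the model is an orthogonal projection `P`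
    (P : M →L[ℂ] M) (hPsa : IsSelfAdjoint P) (hPidem : IsIdempotentElem P)
    (v : ℂ × ℂ → M) (hv : DifferentiableOn ℂ v {z : ℂ × ℂ | ‖z‖ < 1})
    -- `(M, v, I_P)` is a generalized model for `φ`
    (hmodel : ∀ zl zm : ℂ × ℂ, ‖zl‖ < 1 → ‖zm‖ < 1 →
      (1 : ℂ) - starRingEnd ℂ (φ zm) * φ zl =
        (inner ℂ (v zm)
          ((((1 : M →L[ℂ] M) - ContinuousLinearMap.adjoint (IY P τ zm) * IY P τ zl)) (v zl)) : ℂ))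
    -- the model has a `C`-point at `τ`
    (vτ : M)
    (hC : ∀ S : Set (ℂ × ℂ), S ⊆ {z : ℂ × ℂ | ‖z‖ < 1} →
      (∃ c > 0, ∀ z ∈ S, ‖τ - z‖ ≤ c * (1 - ‖z‖)) →
      Tendsto v (nhdsWithin τ S) (nhds vτ)) :
    -- `τ` is a carapoint for `φ`
    (∃ (l : ℕ → ℂ × ℂ) (C : ℝ), (∀ n, ‖l n‖ < 1) ∧ Tendsto l atTop (nhds τ) ∧
      ∀ n, |(1 - ‖φ (l n)‖) / (1 - ‖l n‖)| ≤ C) ∧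
    -- and `φ` is nontangentially differentiable at `τ`
    ∃ (φτ : ℂ) (L : (ℂ × ℂ) →ₗ[ℂ] ℂ), ∀ δ : ℂ × ℂ,
      (starRingEnd ℂ τ.1 * δ.1).re < 0 → (starRingEnd ℂ τ.2 * δ.2).re < 0 →
      Tendsto (fun t : ℝ =>
          (φ (τ.1 + (t : ℂ) * δ.1, τ.2 + (t : ℂ) * δ.2) - φτ) / (t : ℂ))
        (nhdsWithin (0 : ℝ) (Set.Ioi 0)) (nhds (L δ)) :=
  stmt14_general φ τ hτ1 hτ2 P hPsa hPidem v hmodel vτ hC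
end

section
/- Let φ be a nonconstant holomorphic function on 𝔻² with |φ| ≤ 1 that has a carapoint at τ ∈ 𝕋², and let (M, v, I_Y) be a generalized model for φ with a C-point at τ with limit value v_τ. Then ‖v_τ‖ > 0. -/
/-! If `v_τ = 0`, let `λ → τ` radially (a nontangential approach, so `v_λ → 0`). Taking
`μ = λ` in the model identity shows `‖I_Y(λ) v_λ‖ ≤ ‖v_λ‖`, and then the identity with a
fixed `μ` gives `|1 - conj (φ μ) φ λ| ≤ (‖v_μ‖ + ‖I_Y(μ) v_μ‖) ‖v_λ‖ → 0`. Hence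
`conj (φ μ) φ λ → 1` for every `μ`, which forces `φ` to be constant. -/

open Complex Filter Set

open ComplexConjugate Topology

section ModelIdentity

variable {M : Type*} [NormedAddCommGroup M] [InnerProductSpace ℂ M] [CompleteSpace M]

lemma norm_apply_le_of_one_sub_conj_mul_self_eq_inner {T : M →L[ℂ] M} {x : M} {w : ℂ}
    (hw : ‖w‖ ≤ 1)
    (h : 1 - conj w * w = inner ℂ x ((1 - ContinuousLinearMap.adjoint T * T) x)) :
    ‖T x‖ ≤ ‖x‖ := by
  rw [sub_apply, one_apply_eq_self, mul_apply_eq_comp, inner_sub_right,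
    ContinuousLinearMap.adjoint_inner_right, inner_self_eq_norm_sq_to_K,
    inner_self_eq_norm_sq_to_K, conj_mul'] at h
  have h' : (1 : ℝ) - ‖w‖ ^ 2 = ‖x‖ ^ 2 - ‖T x‖ ^ 2 :=
    Complex.ofReal_injective (by push_cast; exact h)
  nlinarith [norm_nonneg (T x), norm_nonneg x, norm_nonneg w]

lemma norm_one_sub_conj_mul_le {S T : M →L[ℂ] M} {x y : M} {w w' : ℂ}
    (hT : ‖T x‖ ≤ ‖x‖)
    (h : 1 - conj w' * w = inner ℂ y ((1 - ContinuousLinearMap.adjoint S * T) x)) :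
    ‖1 - conj w' * w‖ ≤ (‖y‖ + ‖S y‖) * ‖x‖ := by
  rw [sub_apply, one_apply_eq_self, mul_apply_eq_comp, inner_sub_right,
    ContinuousLinearMap.adjoint_inner_right] at h
  calc ‖1 - conj w' * w‖ ≤ ‖(inner ℂ y x : ℂ)‖ + ‖(inner ℂ (S y) (T x) : ℂ)‖ :=
        h ▸ norm_sub_le _ _
    _ ≤ ‖y‖ * ‖x‖ + ‖S y‖ * ‖T x‖ :=
        add_le_add (norm_inner_le_norm _ _) (norm_inner_le_norm _ _)
    _ ≤ ‖y‖ * ‖x‖ + ‖S y‖ * ‖x‖ := by gcongr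
    _ = (‖y‖ + ‖S y‖) * ‖x‖ := by ring

end ModelIdentity

section RadialSegment

variable {E : Type*} [NormedAddCommGroup E] [NormedSpace ℝ E]

lemma norm_smul_lt_one_of_mem_Ico {τ : E} (hτ : ‖τ‖ ≤ 1) {t : ℝ} (ht : t ∈ Ico (0 : ℝ) 1) :
    ‖t • τ‖ < 1 := by
  rw [norm_smul, Real.norm_of_nonneg ht.1]
  exact (mul_le_of_le_one_right ht.1 hτ).trans_lt ht.2

lemma norm_sub_smul_le_one_sub_norm_smul {τ : E} (hτ : ‖τ‖ ≤ 1) {t : ℝ}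
    (ht : t ∈ Ico (0 : ℝ) 1) : ‖τ - t • τ‖ ≤ 1 - ‖t • τ‖ := by
  have hsub : τ - t • τ = (1 - t) • τ := by rw [sub_smul, one_smul]
  rw [hsub, norm_smul, norm_smul, Real.norm_of_nonneg ht.1,
    Real.norm_of_nonneg (sub_nonneg.2 ht.2.le)]
  nlinarith [ht.2, norm_nonneg τ]

lemma nhdsWithin_image_smul_Ico_neBot (τ : E) :
    (𝓝[(fun t : ℝ => t • τ) '' Ico 0 1] τ).NeBot := by
  have hcont : Tendsto (fun t : ℝ => t • τ) (𝓝[<] 1) (𝓝 τ) := by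
    have hc : Continuous fun t : ℝ => t • τ := continuous_id.smul continuous_const
    simpa using (hc.tendsto 1).mono_left nhdsWithin_le_nhds
  have hmem : ∀ᶠ t in 𝓝[<] (1 : ℝ), t • τ ∈ (fun t : ℝ => t • τ) '' Ico 0 1 :=
    eventually_of_mem (Ico_mem_nhdsLT zero_lt_one) fun t ht => mem_image_of_mem _ ht
  exact (tendsto_nhdsWithin_iff.2 ⟨hcont, hmem⟩).neBot

end RadialSegment

lemma eq_of_tendsto_conj_mul_nhds_one {α : Type*} {l : Filter α} [l.NeBot] {f : α → ℂ}
    {a b : ℂ} (ha : Tendsto (fun x => conj a * f x) l (𝓝 1))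
    (hb : Tendsto (fun x => conj b * f x) l (𝓝 1)) : a = b := by
  have hba : Tendsto (fun x => conj b * (conj a * f x)) l (𝓝 (conj b)) := by
    simpa using ha.const_mul (conj b)
  have hab : Tendsto (fun x => conj b * (conj a * f x)) l (𝓝 (conj a)) := by
    simpa [mul_left_comm] using hb.const_mul (conj a)
  exact (starRingEnd ℂ).injective (tendsto_nhds_unique hab hba)

theorem stmt16_general {M : Type*} [NormedAddCommGroup M] [InnerProductSpace ℂ M] [CompleteSpace M]
    (φ : ℂ × ℂ → ℂ)
    (hφb : ∀ z : ℂ × ℂ, ‖z‖ < 1 → ‖φ z‖ ≤ 1)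
    -- `φ` is nonconstant
    (hφnc : ∃ a b : ℂ × ℂ, ‖a‖ < 1 ∧ ‖b‖ < 1 ∧ φ a ≠ φ b)
    (τ : ℂ × ℂ) (hτ1 : ‖τ.1‖ = 1) (hτ2 : ‖τ.2‖ = 1)
    (Y : M →L[ℂ] M)
    (v : ℂ × ℂ → M)
    -- `(M, v, I_Y)` is a generalized model for `φ`
    (hmodel : ∀ zl zm : ℂ × ℂ, ‖zl‖ < 1 → ‖zm‖ < 1 →
      (1 : ℂ) - starRingEnd ℂ (φ zm) * φ zl =
        (inner ℂ (v zm)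
          ((((1 : M →L[ℂ] M) - ContinuousLinearMap.adjoint (IY Y τ zm) * IY Y τ zl)) (v zl)) : ℂ))
    -- with a `C`-point at `τ` with limit value `vτ`
    (vτ : M)
    (hC : ∀ S : Set (ℂ × ℂ), S ⊆ {z : ℂ × ℂ | ‖z‖ < 1} →
      (∃ c > 0, ∀ z ∈ S, ‖τ - z‖ ≤ c * (1 - ‖z‖)) →
      Tendsto v (nhdsWithin τ S) (nhds vτ)) :
    0 < ‖vτ‖ := by
  obtain ⟨a, b, ha, hb, hab⟩ := hφnc
  have hτ : ‖τ‖ ≤ 1 := by simp [Prod.norm_def, hτ1, hτ2]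
  set S := (fun t : ℝ => t • τ) '' Ico 0 1
  have := nhdsWithin_image_smul_Ico_neBot τ
  have hS : S ⊆ {z : ℂ × ℂ | ‖z‖ < 1} := by
    rintro _ ⟨t, ht, rfl⟩
    exact norm_smul_lt_one_of_mem_Ico hτ ht
  have hvS : Tendsto v (𝓝[S] τ) (𝓝 vτ) := hC S hS ⟨1, one_pos, by
    rintro _ ⟨t, ht, rfl⟩
    simpa using norm_sub_smul_le_one_sub_norm_smul hτ ht⟩
  rw [norm_pos_iff]
  rintro rfl
  have hlim : ∀ w : ℂ × ℂ, ‖w‖ < 1 → Tendsto (fun z => conj (φ w) * φ z) (𝓝[S] τ) (𝓝 1) := by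
    intro w hw
    rw [tendsto_iff_norm_sub_tendsto_zero]
    refine squeeze_zero' (.of_forall fun _ => norm_nonneg _) ?_
      (by simpa using hvS.norm.const_mul (‖v w‖ + ‖IY Y τ w (v w)‖))
    filter_upwards [self_mem_nhdsWithin] with z hz
    rw [norm_sub_rev]
    have hdiag := norm_apply_le_of_one_sub_conj_mul_self_eq_inner (hφb z (hS hz))
      (hmodel z z (hS hz) (hS hz))
    simpa using norm_one_sub_conj_mul_le hdiag (hmodel z w (hS hz) hw)
  exact hab (eq_of_tendsto_conj_mul_nhds_one (hlim a ha) (hlim b hb))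

theorem stmt16 {M : Type*} [NormedAddCommGroup M] [InnerProductSpace ℂ M] [CompleteSpace M]
    (φ : ℂ × ℂ → ℂ) (hφd : DifferentiableOn ℂ φ {z : ℂ × ℂ | ‖z‖ < 1})
    (hφb : ∀ z : ℂ × ℂ, ‖z‖ < 1 → ‖φ z‖ ≤ 1)
    -- `φ` is nonconstant
    (hφnc : ∃ a b : ℂ × ℂ, ‖a‖ < 1 ∧ ‖b‖ < 1 ∧ φ a ≠ φ b)
    (τ : ℂ × ℂ) (hτ1 : ‖τ.1‖ = 1) (hτ2 : ‖τ.2‖ = 1)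
    -- `τ` is a carapoint for `φ`
    (hcara : ∃ (l : ℕ → ℂ × ℂ) (C : ℝ), (∀ n, ‖l n‖ < 1) ∧ Tendsto l atTop (nhds τ) ∧
      ∀ n, |(1 - ‖φ (l n)‖) / (1 - ‖l n‖)| ≤ C)
    (Y : M →L[ℂ] M) (hY : Y.IsPositive) (hY' : ((1 : M →L[ℂ] M) - Y).IsPositive)
    (v : ℂ × ℂ → M) (hv : DifferentiableOn ℂ v {z : ℂ × ℂ | ‖z‖ < 1})
    -- `(M, v, I_Y)` is a generalized model for `φ`
    (hmodel : ∀ zl zm : ℂ × ℂ, ‖zl‖ < 1 → ‖zm‖ < 1 →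
      (1 : ℂ) - starRingEnd ℂ (φ zm) * φ zl =
        (inner ℂ (v zm)
          ((((1 : M →L[ℂ] M) - ContinuousLinearMap.adjoint (IY Y τ zm) * IY Y τ zl)) (v zl)) : ℂ))
    -- with a `C`-point at `τ` with limit value `vτ`
    (vτ : M)
    (hC : ∀ S : Set (ℂ × ℂ), S ⊆ {z : ℂ × ℂ | ‖z‖ < 1} →
      (∃ c > 0, ∀ z ∈ S, ‖τ - z‖ ≤ c * (1 - ‖z‖)) →
      Tendsto v (nhdsWithin τ S) (nhds vτ)) :
    0 < ‖vτ‖ :=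
  stmt16_general φ hφb hφnc τ hτ1 hτ2 Y v hmodel vτ hC
end

section
/- Let φ be holomorphic on 𝔻² with |φ| ≤ 1, τ ∈ 𝕋², and suppose φ has a generalized model (M, v, I_Y) with a C-point at τ. Then τ is a carapoint for φ: there is a sequence λ_n ∈ 𝔻² tending to τ along which (1 − |φ(λ_n)|)/(1 − ‖λ_n‖_∞) is bounded. -/
/-! Along the radius `λ = r τ` the operator `I_Y(r τ)` is the scalar `r` (the `Y`-terms cancel
because `τ̄ʲ τʲ = 1`), so the model identity on the diagonal reads
`1 - |φ(r τ)|² = (1 - r²) ‖v (r τ)‖²`. The radius lies in the cone `‖τ - λ‖ ≤ 1 - ‖λ‖`, so by the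
`C`-point `v` stays bounded along it, and `1 - |φ| ≤ 1 - |φ|² ≤ 2 (1 - r) ‖v‖²` bounds the
ratio. -/

open Complex Filter Set

theorem Ring.inverse_smul_one {𝕜 A : Type*} [Field 𝕜] [Ring A] [Algebra 𝕜 A] (c : 𝕜) :
    Ring.inverse (c • (1 : A)) = c⁻¹ • 1 := by
  rcases eq_or_ne c 0 with rfl | hc
  · simp
  · simpa [Algebra.smul_def] using
      Ring.inverse_unit (Units.map (algebraMap 𝕜 A).toMonoidHom (Units.mk0 c hc))

section Radial

variable {E : Type*} [NormedAddCommGroup E] [NormedSpace ℂ E] {τ : E} {r : ℝ}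

lemma norm_ofReal_smul_of_norm_eq_one (hτ : ‖τ‖ = 1) (hr : 0 ≤ r) : ‖(r : ℂ) • τ‖ = r := by
  rw [norm_smul, hτ, mul_one, norm_real, Real.norm_of_nonneg hr]

lemma norm_sub_ofReal_smul_of_norm_eq_one (hτ : ‖τ‖ = 1) (hr : r ≤ 1) :
    ‖τ - (r : ℂ) • τ‖ = 1 - r := by
  rw [← norm_ofReal_smul_of_norm_eq_one hτ (sub_nonneg.2 hr), ofReal_sub, ofReal_one, sub_smul,
    one_smul]

end Radial

lemma IY_smul_self {M : Type*} [NormedAddCommGroup M] [InnerProductSpace ℂ M] [CompleteSpace M]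
    (Y : M →L[ℂ] M) {τ : ℂ × ℂ} (hτ1 : ‖τ.1‖ = 1) (hτ2 : ‖τ.2‖ = 1) {c : ℂ} (hc : c ≠ 1) :
    IY Y τ (c • τ) = c • 1 := by
  have h1 : starRingEnd ℂ τ.1 * (c * τ.1) = c := by
    rw [mul_left_comm, conj_mul', hτ1]; simp
  have h2 : starRingEnd ℂ τ.2 * (c * τ.2) = c := by
    rw [mul_left_comm, conj_mul', hτ2]; simp
  have hc' : 1 - c ≠ 0 := sub_ne_zero.2 hc.symm
  simp only [IY, Prod.smul_fst, Prod.smul_snd, smul_eq_mul, h1, h2,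
    show ∀ a b : ℂ, a * b * (c * τ.1) * (c * τ.2) = (a * (c * τ.1)) * (b * (c * τ.2)) by
      intros; ring]
  rw [show c • Y + c • (1 - Y) - (c * c) • (1 : M →L[ℂ] M) = (c * (1 - c)) • 1 by module,
    show (1 : M →L[ℂ] M) - c • (1 - Y) - c • Y = (1 - c) • 1 by module,
    Ring.inverse_smul_one, smul_mul_smul_comm, one_mul, mul_inv_cancel_right₀ hc']

lemma one_sub_norm_sq_eq_of_inner_adjoint_smul_one {M : Type*} [NormedAddCommGroup M]
    [InnerProductSpace ℂ M] [CompleteSpace M] {a c : ℂ} {x : M}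
    (h : 1 - starRingEnd ℂ a * a =
      inner ℂ x ((1 - ContinuousLinearMap.adjoint (c • (1 : M →L[ℂ] M)) * (c • 1)) x)) :
    1 - ‖a‖ ^ 2 = (1 - ‖c‖ ^ 2) * ‖x‖ ^ 2 := by
  rw [← ContinuousLinearMap.star_eq_adjoint, star_smul, star_one, smul_mul_smul_comm, one_mul,
    RCLike.star_def, conj_mul', conj_mul'] at h
  simp only [sub_apply, one_apply_eq_self, smul_apply, inner_sub_right, inner_smul_right,
    inner_self_eq_norm_sq_to_K, RCLike.ofReal_eq_complex_ofReal] at h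
  exact_mod_cast
    (by push_cast; rw [h]; ring : ((1 - ‖a‖ ^ 2 : ℝ) : ℂ) = ((1 - ‖c‖ ^ 2) * ‖x‖ ^ 2 : ℝ))

lemma abs_one_sub_div_one_sub_le {x r V : ℝ} (hx : 0 ≤ x) (hr0 : 0 ≤ r) (hr1 : r < 1) (hV : 0 ≤ V)
    (h : 1 - x ^ 2 = (1 - r ^ 2) * V) : |(1 - x) / (1 - r)| ≤ 2 * V := by
  have hx1 : x ≤ 1 := by nlinarith [mul_nonneg (by nlinarith : 0 ≤ 1 - r ^ 2) hV]
  rw [abs_of_nonneg (div_nonneg (by linarith) (by linarith)), div_le_iff₀ (by linarith)]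
  nlinarith

theorem stmt17_general {M : Type*} [NormedAddCommGroup M] [InnerProductSpace ℂ M] [CompleteSpace M]
    (φ : ℂ × ℂ → ℂ)
    (τ : ℂ × ℂ) (hτ1 : ‖τ.1‖ = 1) (hτ2 : ‖τ.2‖ = 1)
    (Y : M →L[ℂ] M)
    (v : ℂ × ℂ → M)
    -- `(M, v, I_Y)` is a generalized model for `φ`
    (hmodel : ∀ zl zm : ℂ × ℂ, ‖zl‖ < 1 → ‖zm‖ < 1 →
      (1 : ℂ) - starRingEnd ℂ (φ zm) * φ zl =
        (inner ℂ (v zm)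
          ((((1 : M →L[ℂ] M) - ContinuousLinearMap.adjoint (IY Y τ zm) * IY Y τ zl)) (v zl)) : ℂ))
    -- with a `C`-point at `τ`
    (vτ : M)
    (hC : ∀ S : Set (ℂ × ℂ), S ⊆ {z : ℂ × ℂ | ‖z‖ < 1} →
      (∃ c > 0, ∀ z ∈ S, ‖τ - z‖ ≤ c * (1 - ‖z‖)) →
      Tendsto v (nhdsWithin τ S) (nhds vτ)) :
    -- `τ` is a carapoint for `φ`
    ∃ (l : ℕ → ℂ × ℂ) (C : ℝ), (∀ n, ‖l n‖ < 1) ∧ Tendsto l atTop (nhds τ) ∧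
      ∀ n, |(1 - ‖φ (l n)‖) / (1 - ‖l n‖)| ≤ C := by
  have hτ : ‖τ‖ = 1 := by simp [Prod.norm_def, hτ1, hτ2]
  set r : ℕ → ℝ := fun n => n / (n + 1)
  have hr0 (n : ℕ) : 0 ≤ r n := by positivity
  have hr1 (n : ℕ) : r n < 1 := (div_lt_one (by positivity)).2 (by linarith)
  set l : ℕ → ℂ × ℂ := fun n => (r n : ℂ) • τ
  have hl_norm (n : ℕ) : ‖l n‖ = r n := norm_ofReal_smul_of_norm_eq_one hτ (hr0 n)
  have hl_disk (n : ℕ) : ‖l n‖ < 1 := (hl_norm n).trans_lt (hr1 n)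
  have hl_lim : Tendsto l atTop (nhds τ) := by
    simpa [l, r] using
      ((continuous_ofReal.tendsto 1).comp (tendsto_natCast_div_add_atTop (1 : ℝ))).smul_const τ
  have hvl : Tendsto (v ∘ l) atTop (nhds vτ) := by
    refine (hC (range l) (range_subset_iff.2 hl_disk)
      ⟨1, one_pos, forall_mem_range.2 fun n => ?_⟩).comp (tendsto_nhdsWithin_range.2 hl_lim)
    rw [one_mul, hl_norm, norm_sub_ofReal_smul_of_norm_eq_one hτ (hr1 n).le]
  obtain ⟨B, hB⟩ := hvl.norm.bddAbove_range
  refine ⟨l, 2 * B ^ 2, hl_disk, hl_lim, fun n => ?_⟩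
  have hdiag := hmodel (l n) (l n) (hl_disk n) (hl_disk n)
  rw [IY_smul_self Y hτ1 hτ2 (by exact_mod_cast (hr1 n).ne)] at hdiag
  have hid := one_sub_norm_sq_eq_of_inner_adjoint_smul_one hdiag
  rw [norm_real, Real.norm_of_nonneg (hr0 n)] at hid
  rw [hl_norm]
  exact (abs_one_sub_div_one_sub_le (norm_nonneg _) (hr0 n) (hr1 n) (sq_nonneg _) hid).trans
    (by gcongr; exact hB ⟨n, rfl⟩)

theorem stmt17 {M : Type*} [NormedAddCommGroup M] [InnerProductSpace ℂ M] [CompleteSpace M]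
    (φ : ℂ × ℂ → ℂ) (hφd : DifferentiableOn ℂ φ {z : ℂ × ℂ | ‖z‖ < 1})
    (hφb : ∀ z : ℂ × ℂ, ‖z‖ < 1 → ‖φ z‖ ≤ 1)
    (τ : ℂ × ℂ) (hτ1 : ‖τ.1‖ = 1) (hτ2 : ‖τ.2‖ = 1)
    (Y : M →L[ℂ] M) (hY : Y.IsPositive) (hY' : ((1 : M →L[ℂ] M) - Y).IsPositive)
    (v : ℂ × ℂ → M) (hv : DifferentiableOn ℂ v {z : ℂ × ℂ | ‖z‖ < 1})
    -- `(M, v, I_Y)` is a generalized model for `φ`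
    (hmodel : ∀ zl zm : ℂ × ℂ, ‖zl‖ < 1 → ‖zm‖ < 1 →
      (1 : ℂ) - starRingEnd ℂ (φ zm) * φ zl =
        (inner ℂ (v zm)
          ((((1 : M →L[ℂ] M) - ContinuousLinearMap.adjoint (IY Y τ zm) * IY Y τ zl)) (v zl)) : ℂ))
    -- with a `C`-point at `τ`
    (vτ : M)
    (hC : ∀ S : Set (ℂ × ℂ), S ⊆ {z : ℂ × ℂ | ‖z‖ < 1} →
      (∃ c > 0, ∀ z ∈ S, ‖τ - z‖ ≤ c * (1 - ‖z‖)) →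
      Tendsto v (nhdsWithin τ S) (nhds vτ)) :
    -- `τ` is a carapoint for `φ`
    ∃ (l : ℕ → ℂ × ℂ) (C : ℝ), (∀ n, ‖l n‖ < 1) ∧ Tendsto l atTop (nhds τ) ∧
      ∀ n, |(1 - ‖φ (l n)‖) / (1 - ‖l n‖)| ≤ C :=
  stmt17_general φ τ hτ1 hτ2 Y v hmodel vτ hC
end
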